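/- arXiv:1705.02818 — 12 statements merged into one kernel-verified Lean document; each statement's English description precedes it below -/
import Mathlib

section
/- Let (K_n) and (K'_n), n ∈ ℕ, be nonempty compact convex subsets of real normed vector spaces E_n and E'_n respectively. For each n let f_n : K_{n+1} → K_n, f'_n : K'_{n+1} → K'_n, ρ_n : K_{n+1} → K'_n and ρ'_n : K'_n → K_n be continuous maps that are affine (preserve convex combinations) and 1-Lipschitz, and assume the approximate intertwining conditions Σ_{n=0}^∞ d_∞(ρ'_n ∘ ρ_n, f_n) < ∞ and Σ_{n=0}^∞ d_∞(ρ_n ∘ ρ'_{n+1}, f'_n) < ∞, where d_∞ denotes the uniform (supremum) distance between two maps with the same compact domain. Let K = {x ∈ Π_n K_n : f_n(x_{n+1}) = x_n for all n} and K' = {x ∈ Π_n K'_n : f'_n(x_{n+1}) = x_n for all n}, each with the product topology. Then there exists a bijection ρ : K → K' which is a homeomorphism and affine, i.e. ρ(λx + (1−λ)y) = λρ(x) + (1−λ)ρ(y) for all x, y ∈ K and λ ∈ [0,1] (convex combinations in K and K' are formed coordinatewise). -/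
/-!
Since the bonding maps are 1-Lipschitz, the distance between two threads is nondecreasing in the
level, so threads whose coordinates become arbitrarily close are equal. A sequence `c` with
summable defects `dist (c n) (f n (c (n + 1)))` is shadowed, to within the tails of the defect
series, by a thread: the coordinatewise limit of the iterates of `c ↦ (n ↦ f n (c (n + 1)))`.
Shadowing `n ↦ ρ n (x (n + 1))` and `n ↦ ρ' n (x' n)` gives maps `Φ` and `Ψ` between the inverse
limits, continuous because the estimates are uniform. The intertwining estimates show that
`Ψ (Φ x)` and `x`, `Φ (Ψ x')` and `x'`, and `Φ (a • x + b • y)` and `a • Φ x + b • Φ y` are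
asymptotically close, hence equal.
-/

open Filter Topology Set

theorem dist_le_ciSup_dist {α β : Type*} [PseudoMetricSpace β] {s : Set α} {t : Set β}
    {g h : α → β} (ht : Bornology.IsBounded t) (hg : MapsTo g s t) (hh : MapsTo h s t)
    {x : α} (hx : x ∈ s) : dist (g x) (h x) ≤ ⨆ y : s, dist (g y) (h y) :=
  le_ciSup (f := fun y : s => dist (g y) (h y)) ⟨Metric.diam t, by
    rintro _ ⟨y, rfl⟩
    exact Metric.dist_le_diam_of_mem ht (hg y.2) (hh y.2)⟩ ⟨x, hx⟩

theorem LipschitzOnWith.dist_le_dist_add {α β : Type*} [PseudoMetricSpace α]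
    [PseudoMetricSpace β] {g : α → β} {s : Set α} (hg : LipschitzOnWith 1 g s) {a b : α}
    (ha : a ∈ s) (hb : b ∈ s) (z : β) : dist (g a) z ≤ dist a b + dist (g b) z :=
  (dist_triangle _ (g b) _).trans
    (add_le_add (by simpa using hg.dist_le_mul a ha b hb) le_rfl)

section InverseLimit

variable {E : ℕ → Type*} {K : ∀ n, Set (E n)} {f : ∀ n, E (n + 1) → E n}

def invLim (K : ∀ n, Set (E n)) (f : ∀ n, E (n + 1) → E n) : Set (∀ n, E n) :=
  {x | (∀ n, x n ∈ K n) ∧ ∀ n, f n (x (n + 1)) = x n}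

def invLimStep (f : ∀ n, E (n + 1) → E n) (c : ∀ n, E n) : ∀ n, E n :=
  fun n => f n (c (n + 1))

theorem invLimStep_iterate_mem (hf : ∀ n, MapsTo (f n) (K (n + 1)) (K n)) {c : ∀ n, E n}
    (hc : ∀ n, c n ∈ K n) (k : ℕ) : ∀ n, (invLimStep f)^[k] c n ∈ K n := by
  induction k with
  | zero => exact hc
  | succ k ih => exact fun n => by rw [Function.iterate_succ_apply']; exact hf n (ih (n + 1))

variable [∀ n, MetricSpace (E n)]

theorem monotone_dist_of_mem_invLim (hfl : ∀ n, LipschitzOnWith 1 (f n) (K (n + 1)))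
    {x y : ∀ n, E n} (hx : x ∈ invLim K f) (hy : y ∈ invLim K f) :
    Monotone fun n => dist (x n) (y n) :=
  monotone_nat_of_le_succ fun n => by
    simpa [hx.2 n, hy.2 n] using (hfl n).dist_le_mul _ (hx.1 (n + 1)) _ (hy.1 (n + 1))

theorem eq_of_mem_invLim_of_dist_le (hfl : ∀ n, LipschitzOnWith 1 (f n) (K (n + 1)))
    {x y : ∀ n, E n} (hx : x ∈ invLim K f) (hy : y ∈ invLim K f) {r : ℕ → ℝ}
    (hr : Tendsto r atTop (𝓝 0)) (hxy : ∀ n, dist (x n) (y n) ≤ r n) : x = y := by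
  have h0 : Tendsto (fun n => dist (x n) (y n)) atTop (𝓝 0) :=
    squeeze_zero (fun _ => dist_nonneg) hxy hr
  funext n
  exact dist_le_zero.mp ((monotone_dist_of_mem_invLim hfl hx hy).ge_of_tendsto h0 n)

theorem dist_invLimStep_iterate_le (hf : ∀ n, MapsTo (f n) (K (n + 1)) (K n))
    (hfl : ∀ n, LipschitzOnWith 1 (f n) (K (n + 1))) {a b : ∀ n, E n}
    (ha : ∀ n, a n ∈ K n) (hb : ∀ n, b n ∈ K n) (k : ℕ) :
    ∀ n, dist ((invLimStep f)^[k] a n) ((invLimStep f)^[k] b n) ≤ dist (a (k + n)) (b (k + n)) := by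
  induction k with
  | zero => intro n; rw [Nat.zero_add]; rfl
  | succ k ih =>
    intro n
    rw [Function.iterate_succ_apply', Function.iterate_succ_apply', Nat.add_right_comm k 1 n]
    have h := (hfl n).dist_le_mul _ (invLimStep_iterate_mem hf ha k (n + 1)) _
      (invLimStep_iterate_mem hf hb k (n + 1))
    rw [NNReal.coe_one, one_mul] at h
    exact h.trans (ih (n + 1))

theorem exists_mem_invLim_dist_le (hK : ∀ n, IsComplete (K n))
    (hf : ∀ n, MapsTo (f n) (K (n + 1)) (K n)) (hfl : ∀ n, LipschitzOnWith 1 (f n) (K (n + 1)))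
    {c : ∀ n, E n} (hc : ∀ n, c n ∈ K n) {u : ℕ → ℝ} (hu : Summable u)
    (hcu : ∀ n, dist (c n) (f n (c (n + 1))) ≤ u n) :
    ∃ y ∈ invLim K f, ∀ n, dist (c n) (y n) ≤ ∑' k, u (k + n) := by
  set T := invLimStep f
  have hmem : ∀ k n, T^[k] c n ∈ K n := invLimStep_iterate_mem hf hc
  have hstep : ∀ n k, dist (T^[k] c n) (T^[k + 1] c n) ≤ u (k + n) := fun n k => by
    rw [Function.iterate_succ_apply]
    exact (dist_invLimStep_iterate_le hf hfl hc (fun m => hf m (hc (m + 1))) k n).trans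
      (hcu (k + n))
  have hsum : ∀ n, Summable fun k => u (k + n) := fun n => (summable_nat_add_iff n).mpr hu
  choose y hyK hy using fun n => cauchySeq_tendsto_of_isComplete (hK n) (fun k => hmem k n)
    (cauchySeq_of_dist_le_of_summable _ (hstep n) (hsum n))
  refine ⟨y, ⟨hyK, fun n => ?_⟩, fun n => dist_le_tsum_of_dist_le_of_tendsto₀ _ (hstep n)
    (hsum n) (hy n)⟩
  have hlim : Tendsto (fun k => T^[k + 1] c n) atTop (𝓝 (f n (y (n + 1)))) := by
    simp_rw [Function.iterate_succ_apply']
    exact ((hfl n).continuousOn _ (hyK _)).tendsto.comp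
      (tendsto_nhdsWithin_iff.mpr ⟨hy (n + 1), Eventually.of_forall fun k => hmem k (n + 1)⟩)
  exact tendsto_nhds_unique hlim ((hy n).comp (tendsto_add_atTop_nat 1))

theorem exists_continuous_invLim_dist_le {X : Type*} [TopologicalSpace X]
    (hK : ∀ n, IsComplete (K n)) (hf : ∀ n, MapsTo (f n) (K (n + 1)) (K n))
    (hfl : ∀ n, LipschitzOnWith 1 (f n) (K (n + 1))) (c : X → ∀ n, E n)
    (hcc : ∀ n, Continuous fun x => c x n) (hc : ∀ x n, c x n ∈ K n) {u : ℕ → ℝ}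
    (hu : Summable u) (hcu : ∀ x n, dist (c x n) (f n (c x (n + 1))) ≤ u n) :
    ∃ Φ : X → invLim K f, Continuous Φ ∧
      ∀ x n, dist (c x n) ((Φ x).1 n) ≤ ∑' k, u (k + n) := by
  choose Φ hΦ hΦc using fun x => exists_mem_invLim_dist_le hK hf hfl (hc x) hu (hcu x)
  refine ⟨fun x => ⟨Φ x, hΦ x⟩, ?_, hΦc⟩
  refine (continuous_pi fun n => Metric.continuous_iff'.mpr fun x e he => ?_).subtype_mk _
  obtain ⟨m, hm, hnm⟩ :=
    (((tendsto_sum_nat_add u).eventually (gt_mem_nhds (by positivity : 0 < e / 3))).and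
      (eventually_ge_atTop n)).exists
  filter_upwards [Metric.continuous_iff'.mp (hcc m) x (e / 3) (by positivity)] with y hy
  calc dist (Φ y n) (Φ x n) ≤ dist (Φ y m) (Φ x m) :=
        monotone_dist_of_mem_invLim hfl (hΦ y) (hΦ x) hnm
    _ ≤ dist (Φ y m) (c y m) + dist (c y m) (c x m) + dist (c x m) (Φ x m) :=
        dist_triangle4 _ _ _ _
    _ < e := by linarith [dist_comm (Φ y m) (c y m), hΦc y m, hΦc x m]

end InverseLimit

section Affine

variable {E : ℕ → Type*} [∀ n, NormedAddCommGroup (E n)] [∀ n, NormedSpace ℝ (E n)]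
  {K : ∀ n, Set (E n)} {f : ∀ n, E (n + 1) → E n}

theorem convex_invLim (hK : ∀ n, Convex ℝ (K n))
    (hfa : ∀ n, ∀ x ∈ K (n + 1), ∀ y ∈ K (n + 1), ∀ a b : ℝ, 0 ≤ a → 0 ≤ b → a + b = 1 →
      f n (a • x + b • y) = a • f n x + b • f n y) :
    Convex ℝ (invLim K f) := fun x hx y hy a b ha hb hab =>
  ⟨fun n => hK n (hx.1 n) (hy.1 n) ha hb hab, fun n => by
    simp only [Pi.add_apply, Pi.smul_apply]
    rw [hfa n _ (hx.1 _) _ (hy.1 _) a b ha hb hab, hx.2, hy.2]⟩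

theorem dist_smul_add_smul_le {V : Type*} [NormedAddCommGroup V] [NormedSpace ℝ V]
    {a b : ℝ} (ha : 0 ≤ a) (hb : 0 ≤ b) (x x' y y' : V) :
    dist (a • x + b • y) (a • x' + b • y') ≤ a * dist x x' + b * dist y y' := by
  refine (dist_add_add_le _ _ _ _).trans_eq ?_
  rw [dist_smul₀, dist_smul₀, Real.norm_of_nonneg ha, Real.norm_of_nonneg hb]

theorem eq_smul_add_smul_of_dist_le (hK : ∀ n, Convex ℝ (K n))
    (hfa : ∀ n, ∀ x ∈ K (n + 1), ∀ y ∈ K (n + 1), ∀ a b : ℝ, 0 ≤ a → 0 ≤ b → a + b = 1 →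
      f n (a • x + b • y) = a • f n x + b • f n y)
    (hfl : ∀ n, LipschitzOnWith 1 (f n) (K (n + 1))) {x y z : ∀ n, E n}
    (hx : x ∈ invLim K f) (hy : y ∈ invLim K f) (hz : z ∈ invLim K f)
    {a b : ℝ} (ha : 0 ≤ a) (hb : 0 ≤ b) (hab : a + b = 1) {p q : ∀ n, E n} {r : ℕ → ℝ}
    (hr : Tendsto r atTop (𝓝 0)) (hpx : ∀ n, dist (p n) (x n) ≤ r n)
    (hqy : ∀ n, dist (q n) (y n) ≤ r n) (hpqz : ∀ n, dist (a • p n + b • q n) (z n) ≤ r n) :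
    z = a • x + b • y := by
  refine eq_of_mem_invLim_of_dist_le hfl hz (convex_invLim hK hfa hx hy ha hb hab)
    (by simpa using hr.const_mul 2) fun n => ?_
  calc dist (z n) (a • x n + b • y n)
      ≤ dist (z n) (a • p n + b • q n) + dist (a • p n + b • q n) (a • x n + b • y n) :=
        dist_triangle _ _ _
    _ ≤ r n + (a * r n + b * r n) := by
        rw [dist_comm]
        exact add_le_add (hpqz n) ((dist_smul_add_smul_le ha hb _ _ _ _).trans
          (add_le_add (mul_le_mul_of_nonneg_left (hpx n) ha)
            (mul_le_mul_of_nonneg_left (hqy n) hb)))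
    _ = 2 * r n := by rw [← add_mul, hab]; ring

end Affine

section Intertwining

variable {E E' : ℕ → Type*} [∀ n, MetricSpace (E n)] [∀ n, MetricSpace (E' n)]

structure ApproxIntertwining (K : ∀ n, Set (E n)) (K' : ∀ n, Set (E' n))
    (f : ∀ n, E (n + 1) → E n) (f' : ∀ n, E' (n + 1) → E' n) (ρ : ∀ n, E (n + 1) → E' n)
    (ρ' : ∀ n, E' n → E n) (ε δ : ℕ → ℝ) : Prop where
  mapsTo_f : ∀ n, MapsTo (f n) (K (n + 1)) (K n)
  mapsTo_f' : ∀ n, MapsTo (f' n) (K' (n + 1)) (K' n)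
  mapsTo_ρ : ∀ n, MapsTo (ρ n) (K (n + 1)) (K' n)
  mapsTo_ρ' : ∀ n, MapsTo (ρ' n) (K' n) (K n)
  lipschitz_f : ∀ n, LipschitzOnWith 1 (f n) (K (n + 1))
  lipschitz_f' : ∀ n, LipschitzOnWith 1 (f' n) (K' (n + 1))
  lipschitz_ρ : ∀ n, LipschitzOnWith 1 (ρ n) (K (n + 1))
  lipschitz_ρ' : ∀ n, LipschitzOnWith 1 (ρ' n) (K' n)
  dist_ρ'_ρ_le : ∀ n, ∀ x ∈ K (n + 1), dist (ρ' n (ρ n x)) (f n x) ≤ ε n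
  dist_ρ_ρ'_le : ∀ n, ∀ x ∈ K' (n + 1), dist (ρ n (ρ' (n + 1) x)) (f' n x) ≤ δ n
  summable_ε : Summable ε
  summable_δ : Summable δ

namespace ApproxIntertwining

variable {K : ∀ n, Set (E n)} {K' : ∀ n, Set (E' n)} {f : ∀ n, E (n + 1) → E n}
  {f' : ∀ n, E' (n + 1) → E' n} {ρ : ∀ n, E (n + 1) → E' n} {ρ' : ∀ n, E' n → E n}
  {ε δ : ℕ → ℝ}

theorem exists_continuous_dist_ρ_le (h : ApproxIntertwining K K' f f' ρ ρ' ε δ)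
    (hK' : ∀ n, IsComplete (K' n)) :
    ∃ Φ : invLim K f → invLim K' f', Continuous Φ ∧ ∃ r : ℕ → ℝ, Tendsto r atTop (𝓝 0) ∧
      ∀ x n, dist (ρ n (x.1 (n + 1))) ((Φ x).1 n) ≤ r n := by
  obtain ⟨Φ, hΦc, hΦ⟩ := exists_continuous_invLim_dist_le hK' h.mapsTo_f' h.lipschitz_f'
    (fun (x : invLim K f) m => ρ m (x.1 (m + 1)))
    (fun m => (h.lipschitz_ρ m).continuousOn.comp_continuous
      ((continuous_apply _).comp continuous_subtype_val) fun x => x.2.1 _)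
    (fun x m => h.mapsTo_ρ m (x.2.1 _))
    (((summable_nat_add_iff 1).mpr h.summable_ε).add h.summable_δ) fun x m => by
      rw [← x.2.2 (m + 1)]
      refine ((h.lipschitz_ρ m).dist_le_dist_add (h.mapsTo_f _ (x.2.1 _))
        (h.mapsTo_ρ' _ (h.mapsTo_ρ _ (x.2.1 _))) _).trans
        (add_le_add ?_ (h.dist_ρ_ρ'_le _ _ (h.mapsTo_ρ _ (x.2.1 _))))
      rw [dist_comm]
      exact h.dist_ρ'_ρ_le _ _ (x.2.1 _)
  exact ⟨Φ, hΦc, _, tendsto_sum_nat_add fun n => ε (n + 1) + δ n, hΦ⟩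

theorem exists_continuous_dist_ρ'_le (h : ApproxIntertwining K K' f f' ρ ρ' ε δ)
    (hK : ∀ n, IsComplete (K n)) :
    ∃ Ψ : invLim K' f' → invLim K f, Continuous Ψ ∧ ∃ r : ℕ → ℝ, Tendsto r atTop (𝓝 0) ∧
      ∀ x n, dist (ρ' n (x.1 n)) ((Ψ x).1 n) ≤ r n := by
  obtain ⟨Ψ, hΨc, hΨ⟩ := exists_continuous_invLim_dist_le hK h.mapsTo_f h.lipschitz_f
    (fun (x : invLim K' f') m => ρ' m (x.1 m))
    (fun m => (h.lipschitz_ρ' m).continuousOn.comp_continuous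
      ((continuous_apply _).comp continuous_subtype_val) fun x => x.2.1 _)
    (fun x m => h.mapsTo_ρ' m (x.2.1 _)) (h.summable_δ.add h.summable_ε) fun x m => by
      rw [← x.2.2 m]
      refine ((h.lipschitz_ρ' m).dist_le_dist_add (h.mapsTo_f' _ (x.2.1 _))
        (h.mapsTo_ρ _ (h.mapsTo_ρ' _ (x.2.1 _))) _).trans
        (add_le_add ?_ (h.dist_ρ'_ρ_le _ _ (h.mapsTo_ρ' _ (x.2.1 _))))
      rw [dist_comm]
      exact h.dist_ρ_ρ'_le _ _ (x.2.1 _)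
  exact ⟨Ψ, hΨc, _, tendsto_sum_nat_add (δ + ε), hΨ⟩

variable {Φ : invLim K f → invLim K' f'} {Ψ : invLim K' f' → invLim K f} {r r' : ℕ → ℝ}

theorem leftInverse_of_dist_le (h : ApproxIntertwining K K' f f' ρ ρ' ε δ)
    (hr : Tendsto r atTop (𝓝 0)) (hr' : Tendsto r' atTop (𝓝 0))
    (hΦ : ∀ x n, dist (ρ n (x.1 (n + 1))) ((Φ x).1 n) ≤ r n)
    (hΨ : ∀ x n, dist (ρ' n (x.1 n)) ((Ψ x).1 n) ≤ r' n) :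
    Function.LeftInverse Ψ Φ := fun x => Subtype.ext <| by
  refine eq_of_mem_invLim_of_dist_le h.lipschitz_f (Ψ (Φ x)).2 x.2
    (by simpa using hr'.add (hr.add h.summable_ε.tendsto_atTop_zero)) fun n => ?_
  rw [← x.2.2 n]
  calc dist ((Ψ (Φ x)).1 n) (f n (x.1 (n + 1)))
      ≤ dist ((Ψ (Φ x)).1 n) (ρ' n ((Φ x).1 n)) + dist (ρ' n ((Φ x).1 n)) (f n (x.1 (n + 1))) :=
        dist_triangle _ _ _
    _ ≤ r' n + (dist ((Φ x).1 n) (ρ n (x.1 (n + 1)))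
          + dist (ρ' n (ρ n (x.1 (n + 1)))) (f n (x.1 (n + 1)))) :=
        add_le_add ((dist_comm _ _).trans_le (hΨ _ n))
          ((h.lipschitz_ρ' n).dist_le_dist_add ((Φ x).2.1 n) (h.mapsTo_ρ n (x.2.1 _)) _)
    _ ≤ r' n + (r n + ε n) := by
        gcongr
        · exact (dist_comm _ _).trans_le (hΦ x n)
        · exact h.dist_ρ'_ρ_le n _ (x.2.1 _)

theorem rightInverse_of_dist_le (h : ApproxIntertwining K K' f f' ρ ρ' ε δ)
    (hr : Tendsto r atTop (𝓝 0)) (hr' : Tendsto r' atTop (𝓝 0))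
    (hΦ : ∀ x n, dist (ρ n (x.1 (n + 1))) ((Φ x).1 n) ≤ r n)
    (hΨ : ∀ x n, dist (ρ' n (x.1 n)) ((Ψ x).1 n) ≤ r' n) :
    Function.RightInverse Ψ Φ := fun x => Subtype.ext <| by
  refine eq_of_mem_invLim_of_dist_le h.lipschitz_f' (Φ (Ψ x)).2 x.2
    (by simpa using hr.add ((hr'.comp (tendsto_add_atTop_nat 1)).add
      h.summable_δ.tendsto_atTop_zero)) fun n => ?_
  rw [← x.2.2 n]
  calc dist ((Φ (Ψ x)).1 n) (f' n (x.1 (n + 1)))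
      ≤ dist ((Φ (Ψ x)).1 n) (ρ n ((Ψ x).1 (n + 1)))
          + dist (ρ n ((Ψ x).1 (n + 1))) (f' n (x.1 (n + 1))) :=
        dist_triangle _ _ _
    _ ≤ r n + (dist ((Ψ x).1 (n + 1)) (ρ' (n + 1) (x.1 (n + 1)))
          + dist (ρ n (ρ' (n + 1) (x.1 (n + 1)))) (f' n (x.1 (n + 1)))) :=
        add_le_add ((dist_comm _ _).trans_le (hΦ _ n))
          ((h.lipschitz_ρ n).dist_le_dist_add ((Ψ x).2.1 _) (h.mapsTo_ρ' _ (x.2.1 _)) _)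
    _ ≤ r n + (r' (n + 1) + δ n) := by
        gcongr
        · exact (dist_comm _ _).trans_le (hΨ x _)
        · exact h.dist_ρ_ρ'_le n _ (x.2.1 _)

end ApproxIntertwining

end Intertwining

theorem stmt_0_general
    (E E' : ℕ → Type*)
    [∀ n, NormedAddCommGroup (E n)] [∀ n, NormedSpace ℝ (E n)]
    [∀ n, NormedAddCommGroup (E' n)] [∀ n, NormedSpace ℝ (E' n)]
    (K : ∀ n, Set (E n)) (K' : ∀ n, Set (E' n))
    (hKcp : ∀ n, IsCompact (K n))
    (hK'cp : ∀ n, IsCompact (K' n)) (hK'cv : ∀ n, Convex ℝ (K' n))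
    (f : ∀ n, E (n + 1) → E n) (f' : ∀ n, E' (n + 1) → E' n)
    (ρ : ∀ n, E (n + 1) → E' n) (ρ' : ∀ n, E' n → E n)
    -- the maps send the relevant compact convex sets into each other
    (hf : ∀ n, Set.MapsTo (f n) (K (n + 1)) (K n))
    (hf' : ∀ n, Set.MapsTo (f' n) (K' (n + 1)) (K' n))
    (hρ : ∀ n, Set.MapsTo (ρ n) (K (n + 1)) (K' n))
    (hρ' : ∀ n, Set.MapsTo (ρ' n) (K' n) (K n))
    -- 1-Lipschitz (contractive)
    (hfl : ∀ n, LipschitzOnWith 1 (f n) (K (n + 1)))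
    (hf'l : ∀ n, LipschitzOnWith 1 (f' n) (K' (n + 1)))
    (hρl : ∀ n, LipschitzOnWith 1 (ρ n) (K (n + 1)))
    (hρ'l : ∀ n, LipschitzOnWith 1 (ρ' n) (K' n))
    -- affine
    (hf'a : ∀ n, ∀ x ∈ K' (n + 1), ∀ y ∈ K' (n + 1), ∀ a b : ℝ, 0 ≤ a → 0 ≤ b → a + b = 1 →
      f' n (a • x + b • y) = a • f' n x + b • f' n y)
    (hρa : ∀ n, ∀ x ∈ K (n + 1), ∀ y ∈ K (n + 1), ∀ a b : ℝ, 0 ≤ a → 0 ≤ b → a + b = 1 →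
      ρ n (a • x + b • y) = a • ρ n x + b • ρ n y)
    -- approximate intertwining, with respect to the uniform distance
    (hsum1 : Summable (fun n => ⨆ x : K (n + 1), dist (ρ' n (ρ n x)) (f n x)))
    (hsum2 : Summable (fun n => ⨆ x : K' (n + 1), dist (ρ n (ρ' (n + 1) x)) (f' n x))) :
    -- conclusion: the inverse limits are affinely homeomorphic
    ∀ (Klim : Set (∀ n, E n)) (K'lim : Set (∀ n, E' n)),
      Klim = {x | (∀ n, x n ∈ K n) ∧ ∀ n, f n (x (n + 1)) = x n} →
      K'lim = {x | (∀ n, x n ∈ K' n) ∧ ∀ n, f' n (x (n + 1)) = x n} →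
      ∃ h : Klim ≃ₜ K'lim,
        ∀ (x y : Klim) (a b : ℝ), 0 ≤ a → 0 ≤ b → a + b = 1 →
          ∀ hmem : (fun n => a • (x : ∀ n, E n) n + b • (y : ∀ n, E n) n) ∈ Klim,
            ((h ⟨_, hmem⟩ : ∀ n, E' n)) =
              fun n => a • (h x : ∀ n, E' n) n + b • (h y : ∀ n, E' n) n := by
  intro Klim K'lim hKlim hK'lim
  obtain rfl : Klim = invLim K f := hKlim
  obtain rfl : K'lim = invLim K' f' := hK'lim
  have h : ApproxIntertwining K K' f f' ρ ρ' _ _ := ⟨hf, hf', hρ, hρ', hfl, hf'l, hρl, hρ'l,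
    fun n _ => dist_le_ciSup_dist (hKcp n).isBounded ((hρ' n).comp (hρ n)) (hf n),
    fun n _ => dist_le_ciSup_dist (hK'cp n).isBounded ((hρ n).comp (hρ' (n + 1))) (hf' n),
    hsum1, hsum2⟩
  obtain ⟨Φ, hΦc, r, hr, hΦ⟩ := h.exists_continuous_dist_ρ_le fun n => (hK'cp n).isComplete
  obtain ⟨Ψ, hΨc, r', hr', hΨ⟩ := h.exists_continuous_dist_ρ'_le fun n => (hKcp n).isComplete
  refine ⟨⟨⟨Φ, Ψ, h.leftInverse_of_dist_le hr hr' hΦ hΨ,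
    h.rightInverse_of_dist_le hr hr' hΦ hΨ⟩, hΦc, hΨc⟩, fun x y a b ha hb hab hmem => ?_⟩
  refine eq_smul_add_smul_of_dist_le hK'cv hf'a hf'l (Φ x).2 (Φ y).2 (Φ _).2 ha hb hab hr
    (hΦ x) (hΦ y) fun n => ?_
  rw [← hρa n _ (x.2.1 _) _ (y.2.1 _) a b ha hb hab]
  exact hΦ ⟨_, hmem⟩ n

/-- Approximate intertwining of two inverse limits of compact convex metric spaces:
if the maps `ρ_n : K_{n+1} → K'_n` and `ρ'_n : K'_n → K_n` (contractive, affine, continuous)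
approximately intertwine the connecting maps `f_n` and `f'_n` in the summable sense, then the
inverse limits `K` and `K'` are affinely homeomorphic. -/
theorem stmt_0
    (E E' : ℕ → Type*)
    [∀ n, NormedAddCommGroup (E n)] [∀ n, NormedSpace ℝ (E n)]
    [∀ n, NormedAddCommGroup (E' n)] [∀ n, NormedSpace ℝ (E' n)]
    (K : ∀ n, Set (E n)) (K' : ∀ n, Set (E' n))
    (hKne : ∀ n, (K n).Nonempty) (hKcp : ∀ n, IsCompact (K n)) (hKcv : ∀ n, Convex ℝ (K n))
    (hK'ne : ∀ n, (K' n).Nonempty) (hK'cp : ∀ n, IsCompact (K' n)) (hK'cv : ∀ n, Convex ℝ (K' n))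
    (f : ∀ n, E (n + 1) → E n) (f' : ∀ n, E' (n + 1) → E' n)
    (ρ : ∀ n, E (n + 1) → E' n) (ρ' : ∀ n, E' n → E n)
    -- the maps send the relevant compact convex sets into each other
    (hf : ∀ n, Set.MapsTo (f n) (K (n + 1)) (K n))
    (hf' : ∀ n, Set.MapsTo (f' n) (K' (n + 1)) (K' n))
    (hρ : ∀ n, Set.MapsTo (ρ n) (K (n + 1)) (K' n))
    (hρ' : ∀ n, Set.MapsTo (ρ' n) (K' n) (K n))
    -- continuity
    (hfc : ∀ n, ContinuousOn (f n) (K (n + 1)))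
    (hf'c : ∀ n, ContinuousOn (f' n) (K' (n + 1)))
    (hρc : ∀ n, ContinuousOn (ρ n) (K (n + 1)))
    (hρ'c : ∀ n, ContinuousOn (ρ' n) (K' n))
    -- 1-Lipschitz (contractive)
    (hfl : ∀ n, LipschitzOnWith 1 (f n) (K (n + 1)))
    (hf'l : ∀ n, LipschitzOnWith 1 (f' n) (K' (n + 1)))
    (hρl : ∀ n, LipschitzOnWith 1 (ρ n) (K (n + 1)))
    (hρ'l : ∀ n, LipschitzOnWith 1 (ρ' n) (K' n))
    -- affine
    (hfa : ∀ n, ∀ x ∈ K (n + 1), ∀ y ∈ K (n + 1), ∀ a b : ℝ, 0 ≤ a → 0 ≤ b → a + b = 1 →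
      f n (a • x + b • y) = a • f n x + b • f n y)
    (hf'a : ∀ n, ∀ x ∈ K' (n + 1), ∀ y ∈ K' (n + 1), ∀ a b : ℝ, 0 ≤ a → 0 ≤ b → a + b = 1 →
      f' n (a • x + b • y) = a • f' n x + b • f' n y)
    (hρa : ∀ n, ∀ x ∈ K (n + 1), ∀ y ∈ K (n + 1), ∀ a b : ℝ, 0 ≤ a → 0 ≤ b → a + b = 1 →
      ρ n (a • x + b • y) = a • ρ n x + b • ρ n y)
    (hρ'a : ∀ n, ∀ x ∈ K' n, ∀ y ∈ K' n, ∀ a b : ℝ, 0 ≤ a → 0 ≤ b → a + b = 1 →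
      ρ' n (a • x + b • y) = a • ρ' n x + b • ρ' n y)
    -- approximate intertwining, with respect to the uniform distance
    (hsum1 : Summable (fun n => ⨆ x : K (n + 1), dist (ρ' n (ρ n x)) (f n x)))
    (hsum2 : Summable (fun n => ⨆ x : K' (n + 1), dist (ρ n (ρ' (n + 1) x)) (f' n x))) :
    -- conclusion: the inverse limits are affinely homeomorphic
    ∀ (Klim : Set (∀ n, E n)) (K'lim : Set (∀ n, E' n)),
      Klim = {x | (∀ n, x n ∈ K n) ∧ ∀ n, f n (x (n + 1)) = x n} →
      K'lim = {x | (∀ n, x n ∈ K' n) ∧ ∀ n, f' n (x (n + 1)) = x n} →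
      ∃ h : Klim ≃ₜ K'lim,
        ∀ (x y : Klim) (a b : ℝ), 0 ≤ a → 0 ≤ b → a + b = 1 →
          ∀ hmem : (fun n => a • (x : ∀ n, E n) n + b • (y : ∀ n, E n) n) ∈ Klim,
            ((h ⟨_, hmem⟩ : ∀ n, E' n)) =
              fun n => a • (h x : ∀ n, E' n) n + b • (h y : ∀ n, E' n) n :=
  stmt_0_general E E' K K' hKcp hK'cp hK'cv f f' ρ ρ' hf hf' hρ hρ' hfl hf'l hρl hρ'l hf'a hρa hsum1
    hsum2
end

section
/- Let (K_n), n ∈ ℕ, be nonempty compact convex subsets of real normed vector spaces E_n, and let f_n, f'_n : K_{n+1} → K_n be two sequences of continuous affine 1-Lipschitz maps satisfying Σ_{n=0}^∞ d_∞(f_n, f'_n) < ∞, where d_∞ is the uniform distance. Let K = {x ∈ Π_n K_n : f_n(x_{n+1}) = x_n for all n} and K' = {x ∈ Π_n K_n : f'_n(x_{n+1}) = x_n for all n}, with the product topology. Then there exists an affine homeomorphism ρ : K → K', i.e. a bijective homeomorphism satisfying ρ(λx + (1−λ)y) = λρ(x) + (1−λ)ρ(y) for all x, y ∈ K and λ ∈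 [0,1]. -/
/-!
Write `T_f x = (f_n (x_{n+1}))_n` (`step f`) for the shift of `Π_n K_n` along the bonding maps, so
that the inverse limit is the fixed point set of `T_f`. A point `x` of the `f`-limit is moved by
`T_{f'}` by at most `ε_n = d_∞(f_n, f'_n)` in coordinate `n`, and since the maps are 1-Lipschitz the
`n`-th coordinates of `T_{f'}^m x` move by at most `ε_{n+m}` per step. Hence
`ρ x = lim_m T_{f'}^m x` (`transfer f' x`) exists, is a fixed point of `T_{f'}`, lies within the
tail `Σ_{k ≥ n} ε_k` of `x` in coordinate `n`, and depends continuously (uniform limit) and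
affinely (limit of affine maps) on `x`. Building `σ` from `T_f` in the same way, `T_f^m (ρ x)` is
within `Σ_{k ≥ n+m} ε_k` of `T_f^m x = x`, so `σ ∘ ρ = id`, and symmetrically `ρ ∘ σ = id`.
-/

open Filter Topology Set

def AffineOn {V W : Type*} [AddCommMonoid V] [Module ℝ V] [AddCommMonoid W] [Module ℝ W]
    (g : V → W) (s : Set V) : Prop :=
  ∀ x ∈ s, ∀ y ∈ s, ∀ a b : ℝ, 0 ≤ a → 0 ≤ b → a + b = 1 →
    g (a • x + b • y) = a • g x + b • g y

theorem AffineOn.iterate {V : Type*} [AddCommMonoid V] [Module ℝ V] {g : V → V} {s : Set V}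
    (hg : AffineOn g s) (hs : MapsTo g s s) (m : ℕ) : AffineOn g^[m] s := by
  induction m with
  | zero => intro x _ y _ a b _ _ _; rfl
  | succ m ih =>
    intro x hx y hy a b ha hb hab
    simp only [Function.iterate_succ_apply]
    rw [hg x hx y hy a b ha hb hab]
    exact ih _ (hs hx) _ (hs hy) a b ha hb hab

theorem dist_le_iSup_dist {X Y : Type*} [TopologicalSpace X] [PseudoMetricSpace Y]
    {g g' : X → Y} {s : Set X} (hs : IsCompact s) (hg : ContinuousOn g s)
    (hg' : ContinuousOn g' s) {x : X} (hx : x ∈ s) :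
    dist (g x) (g' x) ≤ ⨆ y : s, dist (g y) (g' y) := by
  have hbdd := hs.bddAbove_image (continuous_dist.comp_continuousOn (hg.prodMk hg'))
  rw [image_eq_range] at hbdd
  exact le_ciSup hbdd ⟨x, hx⟩

theorem tendsto_tsum_add_atTop (ε : ℕ → ℝ) (n : ℕ) :
    Tendsto (fun m => ∑' k, ε (n + m + k)) atTop (𝓝 0) := by
  refine ((tendsto_sum_nat_add ε).comp (tendsto_add_atTop_nat n)).congr fun m => ?_
  simp only [Function.comp_apply]
  exact tsum_congr fun k => congrArg ε (by omega)

namespace InverseLimit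

variable {E : ℕ → Type*}

def step (f : ∀ n, E (n + 1) → E n) (x : ∀ n, E n) : ∀ n, E n :=
  fun n => f n (x (n + 1))

def invLimit (K : ∀ n, Set (E n)) (f : ∀ n, E (n + 1) → E n) : Set (∀ n, E n) :=
  {x | (∀ n, x n ∈ K n) ∧ ∀ n, f n (x (n + 1)) = x n}

variable {K : ∀ n, Set (E n)} {f : ∀ n, E (n + 1) → E n}

theorem step_mapsTo (hf : ∀ n, MapsTo (f n) (K (n + 1)) (K n)) :
    MapsTo (step f) (univ.pi K) (univ.pi K) :=
  fun _ hx => mem_univ_pi.2 fun n => hf n (mem_univ_pi.1 hx (n + 1))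

theorem mem_invLimit_iff {x : ∀ n, E n} :
    x ∈ invLimit K f ↔ x ∈ univ.pi K ∧ step f x = x := by
  rw [mem_univ_pi, funext_iff]
  rfl

section Metric

variable [∀ n, MetricSpace (E n)]

theorem continuousOn_step (hf : ∀ n, ContinuousOn (f n) (K (n + 1))) :
    ContinuousOn (step f) (univ.pi K) :=
  continuousOn_pi.2 fun n => (hf n).comp (continuous_apply (n + 1)).continuousOn
    fun _ hx => mem_univ_pi.1 hx (n + 1)

theorem dist_step_iterate_le (hf : ∀ n, MapsTo (f n) (K (n + 1)) (K n))
    (hfl : ∀ n, LipschitzOnWith 1 (f n) (K (n + 1))) (m : ℕ) {x y : ∀ n, E n}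
    (hx : x ∈ univ.pi K) (hy : y ∈ univ.pi K) (n : ℕ) :
    dist ((step f)^[m] x n) ((step f)^[m] y n) ≤ dist (x (n + m)) (y (n + m)) := by
  induction m generalizing x y with
  | zero => rfl
  | succ m ih =>
    rw [Function.iterate_succ_apply, Function.iterate_succ_apply]
    refine (ih (step_mapsTo hf hx) (step_mapsTo hf hy)).trans ?_
    have h := (hfl (n + m)).dist_le_mul _ (mem_univ_pi.1 hx _) _ (mem_univ_pi.1 hy _)
    rwa [NNReal.coe_one, one_mul] at h

noncomputable def transfer (f : ∀ n, E (n + 1) → E n) (y : ∀ n, E n) : ∀ n, E n :=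
  haveI : Nonempty (∀ n, E n) := ⟨y⟩
  limUnder atTop fun m => (step f)^[m] y

section Defect

variable {ε : ℕ → ℝ} {y : ∀ n, E n}

theorem dist_step_iterate_succ_le (hf : ∀ n, MapsTo (f n) (K (n + 1)) (K n))
    (hfl : ∀ n, LipschitzOnWith 1 (f n) (K (n + 1))) (hy : y ∈ univ.pi K)
    (hdefect : ∀ n, dist (step f y n) (y n) ≤ ε n) (n m : ℕ) :
    dist ((step f)^[m] y n) ((step f)^[m + 1] y n) ≤ ε (n + m) := by
  rw [Function.iterate_succ_apply]
  calc dist ((step f)^[m] y n) ((step f)^[m] (step f y) n)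
      ≤ dist (y (n + m)) (step f y (n + m)) :=
        dist_step_iterate_le hf hfl m hy (step_mapsTo hf hy) n
    _ ≤ ε (n + m) := dist_comm (step f y (n + m)) _ ▸ hdefect (n + m)

theorem tendsto_step_iterate_transfer (hK : ∀ n, IsComplete (K n))
    (hf : ∀ n, MapsTo (f n) (K (n + 1)) (K n)) (hfl : ∀ n, LipschitzOnWith 1 (f n) (K (n + 1)))
    (hε : Summable ε) (hy : y ∈ univ.pi K) (hdefect : ∀ n, dist (step f y n) (y n) ≤ ε n) :
    Tendsto (fun m => (step f)^[m] y) atTop (𝓝 (transfer f y)) := by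
  refine tendsto_nhds_limUnder ?_
  have hcoord : ∀ n, ∃ L ∈ K n, Tendsto (fun m => (step f)^[m] y n) atTop (𝓝 L) := fun n =>
    cauchySeq_tendsto_of_isComplete (hK n)
      (fun m => mem_univ_pi.1 ((step_mapsTo hf).iterate m hy) n)
      (cauchySeq_of_dist_le_of_summable _ (dist_step_iterate_succ_le hf hfl hy hdefect n)
        (hε.comp_injective (add_right_injective n)))
  choose L _ hL using hcoord
  exact ⟨L, tendsto_pi_nhds.2 hL⟩

theorem dist_step_iterate_transfer_le (hK : ∀ n, IsComplete (K n))
    (hf : ∀ n, MapsTo (f n) (K (n + 1)) (K n)) (hfl : ∀ n, LipschitzOnWith 1 (f n) (K (n + 1)))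
    (hε : Summable ε) (hy : y ∈ univ.pi K) (hdefect : ∀ n, dist (step f y n) (y n) ≤ ε n)
    (n m : ℕ) : dist ((step f)^[m] y n) (transfer f y n) ≤ ∑' k, ε (n + m + k) := by
  have h := dist_le_tsum_of_dist_le_of_tendsto _ (dist_step_iterate_succ_le hf hfl hy hdefect n)
    (hε.comp_injective (add_right_injective n))
    ((continuous_apply n).tendsto _ |>.comp
      (tendsto_step_iterate_transfer hK hf hfl hε hy hdefect)) m
  simpa only [add_assoc] using h

theorem transfer_mem_invLimit (hK : ∀ n, IsComplete (K n))
    (hf : ∀ n, MapsTo (f n) (K (n + 1)) (K n)) (hfl : ∀ n, LipschitzOnWith 1 (f n) (K (n + 1)))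
    (hε : Summable ε) (hy : y ∈ univ.pi K) (hdefect : ∀ n, dist (step f y n) (y n) ≤ ε n) :
    transfer f y ∈ invLimit K f := by
  have hlim := tendsto_step_iterate_transfer hK hf hfl hε hy hdefect
  have hiter : ∀ m, (step f)^[m] y ∈ univ.pi K := fun m => (step_mapsTo hf).iterate m hy
  have hmem : transfer f y ∈ univ.pi K :=
    (isClosed_set_pi fun n _ => (hK n).isClosed).mem_of_tendsto hlim (Eventually.of_forall hiter)
  have hstep := (continuousOn_step fun n => (hfl n).continuousOn) _ hmem
  have hcomp : Tendsto (fun m => (step f)^[m + 1] y) atTop (𝓝 (step f (transfer f y))) :=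
    (hstep.tendsto.comp (tendsto_nhdsWithin_iff.2 ⟨hlim, Eventually.of_forall hiter⟩)).congr
      fun m => (Function.iterate_succ_apply' _ m y).symm
  exact mem_invLimit_iff.2
    ⟨hmem, tendsto_nhds_unique hcomp (hlim.comp (tendsto_add_atTop_nat 1))⟩

theorem continuousOn_transfer (hK : ∀ n, IsComplete (K n))
    (hf : ∀ n, MapsTo (f n) (K (n + 1)) (K n)) (hfl : ∀ n, LipschitzOnWith 1 (f n) (K (n + 1)))
    (hε : Summable ε) {S : Set (∀ n, E n)} (hS : S ⊆ univ.pi K)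
    (hdefect : ∀ y ∈ S, ∀ n, dist (step f y n) (y n) ≤ ε n) :
    ContinuousOn (transfer f) S := by
  refine continuousOn_pi.2 fun n =>
    TendstoUniformlyOn.continuousOn (p := atTop) (F := fun m y => (step f)^[m] y n)
    ?_ (Frequently.of_forall fun m => ?_)
  · rw [Metric.tendstoUniformlyOn_iff]
    intro δ hδ
    filter_upwards [(tendsto_tsum_add_atTop ε n).eventually_lt_const hδ] with m hm y hy
    rw [dist_comm]
    exact (dist_step_iterate_transfer_le hK hf hfl hε (hS hy) (hdefect y hy) n m).trans_lt hm
  · exact (continuous_apply n).comp_continuousOn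
      (((continuousOn_step fun n => (hfl n).continuousOn).iterate (step_mapsTo hf) m).mono hS)

theorem transfer_eq_of_tendsto {z : ∀ n, E n}
    (h : Tendsto (fun m => (step f)^[m] y) atTop (𝓝 z)) : transfer f y = z :=
  h.limUnder_eq

theorem transfer_eq_of_dist_le (hf : ∀ n, MapsTo (f n) (K (n + 1)) (K n))
    (hfl : ∀ n, LipschitzOnWith 1 (f n) (K (n + 1))) {x : ∀ n, E n} (hx : x ∈ invLimit K f)
    (hy : y ∈ univ.pi K) (hxy : ∀ n, dist (y n) (x n) ≤ ∑' k, ε (n + k)) :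
    transfer f y = x := by
  obtain ⟨hxK, hfix⟩ := mem_invLimit_iff.1 hx
  refine transfer_eq_of_tendsto (tendsto_pi_nhds.2 fun n => ?_)
  rw [tendsto_iff_dist_tendsto_zero]
  refine squeeze_zero (fun _ => dist_nonneg) (fun m => ?_) (tendsto_tsum_add_atTop ε n)
  calc dist ((step f)^[m] y n) (x n)
      = dist ((step f)^[m] y n) ((step f)^[m] x n) := by rw [Function.iterate_fixed hfix]
    _ ≤ dist (y (n + m)) (x (n + m)) := dist_step_iterate_le hf hfl m hy hxK n
    _ ≤ ∑' k, ε (n + m + k) := hxy (n + m)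

variable {f' : ∀ n, E (n + 1) → E n}

theorem dist_step_le_of_mem_invLimit
    (hdist : ∀ n, ∀ z ∈ K (n + 1), dist (f n z) (f' n z) ≤ ε n) {x : ∀ n, E n}
    (hx : x ∈ invLimit K f) (n : ℕ) : dist (step f' x n) (x n) ≤ ε n := by
  rw [← hx.2 n, dist_comm]
  exact hdist n _ (hx.1 (n + 1))

theorem mapsTo_transfer (hK : ∀ n, IsComplete (K n))
    (hf' : ∀ n, MapsTo (f' n) (K (n + 1)) (K n))
    (hf'l : ∀ n, LipschitzOnWith 1 (f' n) (K (n + 1))) (hε : Summable ε)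
    (hdist : ∀ n, ∀ z ∈ K (n + 1), dist (f n z) (f' n z) ≤ ε n) :
    MapsTo (transfer f') (invLimit K f) (invLimit K f') := fun _ hx =>
  transfer_mem_invLimit hK hf' hf'l hε (mem_invLimit_iff.1 hx).1
    (dist_step_le_of_mem_invLimit hdist hx)

theorem transfer_transfer (hK : ∀ n, IsComplete (K n))
    (hf : ∀ n, MapsTo (f n) (K (n + 1)) (K n)) (hfl : ∀ n, LipschitzOnWith 1 (f n) (K (n + 1)))
    (hf' : ∀ n, MapsTo (f' n) (K (n + 1)) (K n))
    (hf'l : ∀ n, LipschitzOnWith 1 (f' n) (K (n + 1))) (hε : Summable ε)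
    (hdist : ∀ n, ∀ z ∈ K (n + 1), dist (f n z) (f' n z) ≤ ε n)
    {x : ∀ n, E n} (hx : x ∈ invLimit K f) : transfer f (transfer f' x) = x := by
  have hxK := (mem_invLimit_iff.1 hx).1
  refine transfer_eq_of_dist_le (ε := ε) hf hfl hx
    (mem_invLimit_iff.1 (mapsTo_transfer hK hf' hf'l hε hdist hx)).1 fun n => ?_
  rw [dist_comm]
  simpa using dist_step_iterate_transfer_le hK hf' hf'l hε hxK
    (dist_step_le_of_mem_invLimit hdist hx) n 0

noncomputable def transferHomeomorph (hK : ∀ n, IsComplete (K n))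
    (hf : ∀ n, MapsTo (f n) (K (n + 1)) (K n)) (hfl : ∀ n, LipschitzOnWith 1 (f n) (K (n + 1)))
    (hf' : ∀ n, MapsTo (f' n) (K (n + 1)) (K n))
    (hf'l : ∀ n, LipschitzOnWith 1 (f' n) (K (n + 1))) (hε : Summable ε)
    (hdist : ∀ n, ∀ z ∈ K (n + 1), dist (f n z) (f' n z) ≤ ε n) :
    invLimit K f ≃ₜ invLimit K f' :=
  have hdist' : ∀ n, ∀ z ∈ K (n + 1), dist (f' n z) (f n z) ≤ ε n := fun n z hz =>
    dist_comm (f n z) _ ▸ hdist n z hz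
  have hsub {g : ∀ n, E (n + 1) → E n} : invLimit K g ⊆ univ.pi K := fun _ hx =>
    (mem_invLimit_iff.1 hx).1
  { toFun := (mapsTo_transfer hK hf' hf'l hε hdist).restrict
    invFun := (mapsTo_transfer hK hf hfl hε hdist').restrict
    left_inv := fun x => Subtype.ext (transfer_transfer hK hf hfl hf' hf'l hε hdist x.2)
    right_inv := fun x => Subtype.ext (transfer_transfer hK hf' hf'l hf hfl hε hdist' x.2)
    continuous_toFun := (continuousOn_transfer hK hf' hf'l hε hsub
      fun _ hx => dist_step_le_of_mem_invLimit hdist hx).mapsToRestrict _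
    continuous_invFun := (continuousOn_transfer hK hf hfl hε hsub
      fun _ hx => dist_step_le_of_mem_invLimit hdist' hx).mapsToRestrict _ }

end Defect

end Metric

section Affine

variable [∀ n, NormedAddCommGroup (E n)] [∀ n, NormedSpace ℝ (E n)]

theorem step_affineOn (hfa : ∀ n, AffineOn (f n) (K (n + 1))) : AffineOn (step f) (univ.pi K) :=
  fun _ hx _ hy a b ha hb hab => funext fun n =>
    hfa n _ (mem_univ_pi.1 hx _) _ (mem_univ_pi.1 hy _) a b ha hb hab

theorem transfer_affine (hK : ∀ n, IsComplete (K n))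
    (hf : ∀ n, MapsTo (f n) (K (n + 1)) (K n)) (hfl : ∀ n, LipschitzOnWith 1 (f n) (K (n + 1)))
    (hfa : ∀ n, AffineOn (f n) (K (n + 1))) {ε : ℕ → ℝ} (hε : Summable ε)
    {x y : ∀ n, E n} (hx : x ∈ univ.pi K) (hy : y ∈ univ.pi K)
    (hdx : ∀ n, dist (step f x n) (x n) ≤ ε n) (hdy : ∀ n, dist (step f y n) (y n) ≤ ε n)
    {a b : ℝ} (ha : 0 ≤ a) (hb : 0 ≤ b) (hab : a + b = 1) :
    transfer f (a • x + b • y) = a • transfer f x + b • transfer f y := by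
  have hlim := ((tendsto_step_iterate_transfer hK hf hfl hε hx hdx).const_smul a).add
    ((tendsto_step_iterate_transfer hK hf hfl hε hy hdy).const_smul b)
  refine transfer_eq_of_tendsto (hlim.congr fun m => ?_)
  exact ((step_affineOn hfa).iterate (step_mapsTo hf) m x hx y hy a b ha hb hab).symm

end Affine

end InverseLimit

open InverseLimit

theorem stmt_1_general
    (E : ℕ → Type*)
    [∀ n, NormedAddCommGroup (E n)] [∀ n, NormedSpace ℝ (E n)]
    (K : ∀ n, Set (E n))
    (hKcp : ∀ n, IsCompact (K n))
    (f f' : ∀ n, E (n + 1) → E n)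
    (hf : ∀ n, Set.MapsTo (f n) (K (n + 1)) (K n))
    (hf' : ∀ n, Set.MapsTo (f' n) (K (n + 1)) (K n))
    (hfl : ∀ n, LipschitzOnWith 1 (f n) (K (n + 1)))
    (hf'l : ∀ n, LipschitzOnWith 1 (f' n) (K (n + 1)))
    (hf'a : ∀ n, ∀ x ∈ K (n + 1), ∀ y ∈ K (n + 1), ∀ a b : ℝ, 0 ≤ a → 0 ≤ b → a + b = 1 →
      f' n (a • x + b • y) = a • f' n x + b • f' n y)
    (hsum : Summable (fun n => ⨆ x : K (n + 1), dist (f n x) (f' n x))) :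
    ∀ (Klim K'lim : Set (∀ n, E n)),
      Klim = {x | (∀ n, x n ∈ K n) ∧ ∀ n, f n (x (n + 1)) = x n} →
      K'lim = {x | (∀ n, x n ∈ K n) ∧ ∀ n, f' n (x (n + 1)) = x n} →
      ∃ h : Klim ≃ₜ K'lim,
        ∀ (x y : Klim) (a b : ℝ), 0 ≤ a → 0 ≤ b → a + b = 1 →
          ∀ hmem : (fun n => a • (x : ∀ n, E n) n + b • (y : ∀ n, E n) n) ∈ Klim,
            ((h ⟨_, hmem⟩ : ∀ n, E n)) =
              fun n => a • (h x : ∀ n, E n) n + b • (h y : ∀ n, E n) n := by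
  intro Klim K'lim hKlim hK'lim
  subst hKlim hK'lim
  have hK n := (hKcp n).isComplete
  have hdist n z (hz : z ∈ K (n + 1)) :
      dist (f n z) (f' n z) ≤ ⨆ x : K (n + 1), dist (f n x) (f' n x) :=
    dist_le_iSup_dist (hKcp (n + 1)) (hfl n).continuousOn (hf'l n).continuousOn hz
  have hdefect {x : ∀ n, E n} (hx : x ∈ invLimit K f) :=
    dist_step_le_of_mem_invLimit hdist hx
  refine ⟨transferHomeomorph hK hf hfl hf' hf'l hsum hdist, fun x y a b ha hb hab _ => ?_⟩
  exact transfer_affine hK hf' hf'l hf'a hsum (mem_invLimit_iff.1 x.2).1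
    (mem_invLimit_iff.1 y.2).1 (hdefect x.2) (hdefect y.2) ha hb hab

/-- If two sequences of contractive continuous affine connecting maps `f_n, f'_n` between the
same compact convex sets satisfy `Σ_n d_∞(f_n, f'_n) < ∞`, then the corresponding inverse
limits are affinely homeomorphic. -/
theorem stmt_1
    (E : ℕ → Type*)
    [∀ n, NormedAddCommGroup (E n)] [∀ n, NormedSpace ℝ (E n)]
    (K : ∀ n, Set (E n))
    (hKne : ∀ n, (K n).Nonempty) (hKcp : ∀ n, IsCompact (K n)) (hKcv : ∀ n, Convex ℝ (K n))
    (f f' : ∀ n, E (n + 1) → E n)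
    (hf : ∀ n, Set.MapsTo (f n) (K (n + 1)) (K n))
    (hf' : ∀ n, Set.MapsTo (f' n) (K (n + 1)) (K n))
    (hfc : ∀ n, ContinuousOn (f n) (K (n + 1)))
    (hf'c : ∀ n, ContinuousOn (f' n) (K (n + 1)))
    (hfl : ∀ n, LipschitzOnWith 1 (f n) (K (n + 1)))
    (hf'l : ∀ n, LipschitzOnWith 1 (f' n) (K (n + 1)))
    (hfa : ∀ n, ∀ x ∈ K (n + 1), ∀ y ∈ K (n + 1), ∀ a b : ℝ, 0 ≤ a → 0 ≤ b → a + b = 1 →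
      f n (a • x + b • y) = a • f n x + b • f n y)
    (hf'a : ∀ n, ∀ x ∈ K (n + 1), ∀ y ∈ K (n + 1), ∀ a b : ℝ, 0 ≤ a → 0 ≤ b → a + b = 1 →
      f' n (a • x + b • y) = a • f' n x + b • f' n y)
    (hsum : Summable (fun n => ⨆ x : K (n + 1), dist (f n x) (f' n x))) :
    ∀ (Klim K'lim : Set (∀ n, E n)),
      Klim = {x | (∀ n, x n ∈ K n) ∧ ∀ n, f n (x (n + 1)) = x n} →
      K'lim = {x | (∀ n, x n ∈ K n) ∧ ∀ n, f' n (x (n + 1)) = x n} →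
      ∃ h : Klim ≃ₜ K'lim,
        ∀ (x y : Klim) (a b : ℝ), 0 ≤ a → 0 ≤ b → a + b = 1 →
          ∀ hmem : (fun n => a • (x : ∀ n, E n) n + b • (y : ∀ n, E n) n) ∈ Klim,
            ((h ⟨_, hmem⟩ : ∀ n, E n)) =
              fun n => a • (h x : ∀ n, E n) n + b • (h y : ∀ n, E n) n :=
  stmt_1_general E K hKcp f f' hf hf' hfl hf'l hf'a hsum
end

section
/- For each n ∈ ℕ let ξ^{(n)} ∈ stdSimplex ℝ (Fin (n+1)) be given, let f_n(x)_j = x_j + x_{n+1}·ξ^{(n)}_j, and let Δ ⊆ Π_n (Fin (n+1) → ℝ) be the corresponding inverse limit. For each n ∈ ℕ, the unique element e_n ∈ Δ with f_{∞,m}(e_n) = e_n^{(m)} for all m ≥ n (where e_n^{(m)} is the standard basis vector) is an extreme point of the convex set Δ. -/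
/-!
A linear map that is injective on the fibre of `A` over an extreme point of its target pulls that
extreme point back to an extreme point of `A`. Restricting `Δ` to the levels `m ≥ n` is such a map:
there `e` is a vertex of every simplex, and an element of `Δ` is determined by its levels `m ≥ n`,
since each level is the image of the next one under `f_m`.
-/

open Set

section ExtremePoints

variable {𝕜 E F : Type*} [Ring 𝕜] [PartialOrder 𝕜] [IsOrderedRing 𝕜]
  [AddCommGroup E] [Module 𝕜 E] [AddCommGroup F] [Module 𝕜 F]

theorem mem_extremePoints_of_mapsTo {A : Set E} {B : Set F} {x : E} (f : E →ₗ[𝕜] F)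
    (hAB : MapsTo f A B) (hx : x ∈ A) (hfx : f x ∈ B.extremePoints 𝕜)
    (hfib : ∀ y ∈ A, f y = f x → y = x) : x ∈ A.extremePoints 𝕜 := by
  refine ⟨hx, fun y hy z hz hxyz ↦ hfib y hy ?_⟩
  have hfxyz : f x ∈ openSegment 𝕜 (f y) (f z) :=
    image_openSegment 𝕜 f.toAffineMap y z ▸ mem_image_of_mem f hxyz
  exact hfx.2 (hAB hy) (hAB hz) hfxyz

end ExtremePoints

theorem single_mem_extremePoints_stdSimplex {𝕜 ι : Type*} [Field 𝕜] [LinearOrder 𝕜]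
    [IsStrictOrderedRing 𝕜] [Fintype ι] [DecidableEq ι] (i : ι) :
    Pi.single i 1 ∈ (stdSimplex 𝕜 ι).extremePoints 𝕜 := by
  refine ⟨single_mem_stdSimplex 𝕜 i, ?_⟩
  rintro y hy z hz ⟨a, b, ha, hb, -, hyz⟩
  have hoff : ∀ j ≠ i, y j = 0 := fun j hj ↦ by
    have hj : a * y j + b * z j = 0 := by simpa [hj] using congrFun hyz j
    nlinarith [hy.1 j, hz.1 j, mul_nonneg hb.le (hz.1 j)]
  have hon : y i = 1 := by
    rw [← hy.2, Finset.sum_eq_single i (fun j _ hj ↦ hoff j hj) (by simp)]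
  funext j
  obtain rfl | hj := eq_or_ne j i
  · simp [hon]
  · simp [hoff j hj, hj]

theorem eq_of_forall_le_eq_of_compatible {X : ℕ → Type*} (g : ∀ m, X (m + 1) → X m)
    {x y : ∀ m, X m} (hx : ∀ m, g m (x (m + 1)) = x m) (hy : ∀ m, g m (y (m + 1)) = y m) (n : ℕ)
    (hxy : ∀ m, n ≤ m → x m = y m) : x = y := by
  funext m
  rcases le_total n m with hnm | hmn
  · exact hxy m hnm
  · induction hmn using Nat.decreasingInduction with
    | self => exact hxy n le_rfl
    | of_succ k _ ih => rw [← hx, ← hy, ih]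

theorem stmt_5_general (ξ : ∀ n : ℕ, Fin (n + 1) → ℝ)
    (Δ : Set (∀ n, Fin (n + 1) → ℝ))
    (hΔ : Δ = {x | (∀ n, x n ∈ stdSimplex ℝ (Fin (n + 1))) ∧
      ∀ n, ∀ j : Fin (n + 1),
        x (n + 1) j.castSucc + x (n + 1) (Fin.last (n + 1)) * ξ n j = x n j})
    (n : ℕ) (e : ∀ m, Fin (m + 1) → ℝ) (heΔ : e ∈ Δ)
    (he : ∀ m, n ≤ m → ∀ j : Fin (m + 1), e m j = if (j : ℕ) = n then 1 else 0) :
    e ∈ Δ.extremePoints ℝ := by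
  let f (m : ℕ) (v : Fin (m + 2) → ℝ) : Fin (m + 1) → ℝ :=
    fun j ↦ v j.castSucc + v (Fin.last (m + 1)) * ξ m j
  have hmem : ∀ x ∈ Δ, (∀ m, x m ∈ stdSimplex ℝ (Fin (m + 1))) ∧ ∀ m, f m (x (m + 1)) = x m := by
    rw [hΔ]
    exact fun x hx ↦ ⟨hx.1, fun m ↦ funext (hx.2 m)⟩
  let restrict : (∀ m, Fin (m + 1) → ℝ) →ₗ[ℝ] ∀ i, Fin (n + i + 1) → ℝ :=
    LinearMap.pi fun i ↦ LinearMap.proj (n + i)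
  have he_single (i : ℕ) : e (n + i) = Pi.single ⟨n, by omega⟩ 1 := by
    funext j
    simp [he (n + i) (by omega) j, Pi.single_apply, Fin.ext_iff]
  refine mem_extremePoints_of_mapsTo restrict
    (B := univ.pi fun i ↦ stdSimplex ℝ (Fin (n + i + 1)))
    (fun x hx ↦ mem_univ_pi.2 fun i ↦ (hmem x hx).1 (n + i)) heΔ ?_ fun y hy hye ↦ ?_
  · rw [extremePoints_pi]
    refine mem_univ_pi.2 fun i ↦ ?_
    rw [show restrict e i = e (n + i) from rfl, he_single]
    exact single_mem_extremePoints_stdSimplex _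
  · refine eq_of_forall_le_eq_of_compatible f (hmem y hy).2 (hmem e heΔ).2 n fun m hnm ↦ ?_
    obtain ⟨i, rfl⟩ := Nat.exists_eq_add_of_le hnm
    exact congrFun hye i

/-- In the inverse limit `Δ` of the standard simplices along the affine maps
`f_n(x)_j = x_j + x_{n+1}·ξ^{(n)}_j`, the element `e_n` (whose `m`-th coordinate is the `n`-th
standard basis vector for all `m ≥ n`) is an extreme point of the convex set `Δ`. -/
theorem stmt_5 (ξ : ∀ n : ℕ, Fin (n + 1) → ℝ)
    (hξ : ∀ n, ξ n ∈ stdSimplex ℝ (Fin (n + 1)))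
    (Δ : Set (∀ n, Fin (n + 1) → ℝ))
    (hΔ : Δ = {x | (∀ n, x n ∈ stdSimplex ℝ (Fin (n + 1))) ∧
      ∀ n, ∀ j : Fin (n + 1),
        x (n + 1) j.castSucc + x (n + 1) (Fin.last (n + 1)) * ξ n j = x n j})
    (n : ℕ) (e : ∀ m, Fin (m + 1) → ℝ) (heΔ : e ∈ Δ)
    (he : ∀ m, n ≤ m → ∀ j : Fin (m + 1), e m j = if (j : ℕ) = n then 1 else 0) :
    e ∈ Δ.extremePoints ℝ :=
  stmt_5_general ξ Δ hΔ n e heΔ he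
end

section
/- For each n ∈ ℕ let ξ^{(n)} ∈ stdSimplex ℝ (Fin (n+1)) be given, let f_n(x)_j = x_j + x_{n+1}·ξ^{(n)}_j, and let Δ ⊆ Π_n (Fin (n+1) → ℝ) be the corresponding inverse limit with the product topology. Let e_n ∈ Δ be the unique element with f_{∞,m}(e_n) equal to the standard basis vector e_n^{(m)} for all m ≥ n. Then every extreme point of Δ lies in the topological closure of the set {e_n : n ∈ ℕ}; that is, {e_n : n ∈ ℕ} is dense in the extreme boundary of Δ. -/
/-!
`Δ` is compact, and it is the closed convex hull of the `e_n`: the relations `f_n(x_{n+1}) = x_n`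
are linear, so for `x ∈ Δ` the convex combination `∑_{j ≤ m} x_m(j) • e_j` satisfies them too; it
agrees with `x` at level `m`, hence at every level `≤ m`, so these combinations converge to `x`.
Milman's converse to the Krein–Milman theorem then puts every extreme point of `Δ` in the closure
of `{e_n}`.
-/

open Set Filter Topology Pointwise

section Milman

variable {E : Type*} [AddCommGroup E] [Module ℝ E] [TopologicalSpace E]
  [IsTopologicalAddGroup E] [ContinuousSMul ℝ E]

theorem IsCompact.convexJoin {s t : Set E} (hs : IsCompact s) (ht : IsCompact t) :
    IsCompact (_root_.convexJoin ℝ s t) := by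
  have : _root_.convexJoin ℝ s t =
      (fun p : E × E × ℝ ↦ AffineMap.lineMap p.1 p.2.1 p.2.2) '' (s ×ˢ t ×ˢ Icc 0 1) := by
    ext x
    simp [mem_convexJoin, segment_eq_image_lineMap, Prod.exists, and_assoc]
  rw [this]
  exact (hs.prod (ht.prod isCompact_Icc)).image AffineMap.lineMap_continuous_uncurry

theorem Finset.isCompact_convexHull_biUnion {ι : Type*} (t : Finset ι) {K : ι → Set E}
    (hK : ∀ i ∈ t, IsCompact (K i)) (hKconv : ∀ i ∈ t, Convex ℝ (K i)) :
    IsCompact (convexHull ℝ (⋃ i ∈ t, K i)) := by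
  classical
  induction t using Finset.induction_on with
  | empty => simp
  | insert i t _ ih =>
    have hKi := hK i (mem_insert_self i t)
    have hKiconv := hKconv i (mem_insert_self i t)
    have ih := ih (fun j hj ↦ hK j (mem_insert_of_mem hj))
      (fun j hj ↦ hKconv j (mem_insert_of_mem hj))
    rw [Finset.set_biUnion_insert, ← convexHull_convexHull_union_right]
    rcases (K i).eq_empty_or_nonempty with hempty | hne
    · simpa [hempty] using ih
    rcases (convexHull ℝ (⋃ j ∈ t, K j)).eq_empty_or_nonempty with hempty' | hne'
    · simpa [hempty', hKiconv.convexHull_eq] using hKi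
    rw [hKiconv.convexHull_union (convex_convexHull ℝ _) hne hne']
    exact hKi.convexJoin ih

variable [T2Space E] [LocallyConvexSpace ℝ E]

/-- Milman's converse to the Krein–Milman theorem. If an extreme point `x` avoided `closure s`,
cover `closure s` by finitely many translates `y + W` of a closed convex neighbourhood `W` of `0`
with `x ∉ y + W`; the convex hull of the union of the closed convex hulls of the pieces is compact,
hence is the whole hull, so `x` lies in one of the pieces' hulls, hence in some `y + W`. -/
theorem extremePoints_closedConvexHull_subset_closure {s : Set E}
    (hs : IsCompact (closedConvexHull ℝ s)) :
    (closedConvexHull ℝ s).extremePoints ℝ ⊆ closure s := by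
  intro x hx
  by_contra hxs
  have hfar : {w | x - w ∉ closure s} ∈ 𝓝 (0 : E) := by
    have : ContinuousAt (fun w ↦ x - w) 0 := by fun_prop
    exact this.preimage_mem_nhds (by simpa using isClosed_closure.isOpen_compl.mem_nhds hxs)
  obtain ⟨W, ⟨hW, hWclosed, -, hWconv⟩, hWfar⟩ :=
    (nhds_hasBasis_absConvex_closed ℝ E).mem_iff.1 hfar
  obtain ⟨t, hts, hcover⟩ := (hs.of_isClosed_subset isClosed_closure
    closure_subset_closedConvexHull).elim_nhds_subcover (fun y ↦ y +ᵥ W)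
      (fun y _ ↦ by simpa using vadd_mem_nhds_vadd y hW)
  set K : E → Set E := fun y ↦ closedConvexHull ℝ ((y +ᵥ W) ∩ s)
  have hKsub : ∀ y, K y ⊆ closedConvexHull ℝ s := fun y ↦
    (closedConvexHull ℝ).monotone inter_subset_right
  have hKW : ∀ y, K y ⊆ y +ᵥ W := fun y ↦
    closedConvexHull_min inter_subset_left (hWconv.vadd y) (hWclosed.vadd y)
  have hC : IsCompact (convexHull ℝ (⋃ y ∈ t, K y)) :=
    t.isCompact_convexHull_biUnion
      (fun y _ ↦ hs.of_isClosed_subset isClosed_closedConvexHull (hKsub y))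
      (fun y _ ↦ convex_closedConvexHull)
  have hsC : s ⊆ convexHull ℝ (⋃ y ∈ t, K y) := by
    intro z hz
    obtain ⟨y, hy, hzy⟩ := mem_iUnion₂.1 (hcover (subset_closure hz))
    exact subset_convexHull ℝ _ (mem_iUnion₂.2 ⟨y, hy, subset_closedConvexHull ⟨hzy, hz⟩⟩)
  have hCeq : convexHull ℝ (⋃ y ∈ t, K y) = closedConvexHull ℝ s :=
    (convexHull_min (iUnion₂_subset fun y _ ↦ hKsub y) convex_closedConvexHull).antisymm
      (closedConvexHull_min hsC (convex_convexHull ℝ _) hC.isClosed)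
  rw [← hCeq] at hx
  obtain ⟨y, hy, hxy⟩ := mem_iUnion₂.1 (extremePoints_convexHull_subset hx)
  obtain ⟨w, hw, rfl⟩ := hKW y hxy
  exact hWfar hw (by simpa using hts y hy)

end Milman

section SimplexInverseLimit

variable (ξ : ∀ n : ℕ, Fin (n + 1) → ℝ)

/-- The linear relations `f_n (x (n + 1)) = x n` that cut the inverse limit out of the product. -/
def simplexThreads : Submodule ℝ (∀ n, Fin (n + 1) → ℝ) where
  carrier := {x | ∀ n, ∀ j : Fin (n + 1),
    x (n + 1) j.castSucc + x (n + 1) (Fin.last (n + 1)) * ξ n j = x n j}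
  add_mem' {x y} hx hy n j := by
    simp only [Pi.add_apply]
    linear_combination hx n j + hy n j
  zero_mem' n j := by simp
  smul_mem' c x hx n j := by
    simp only [Pi.smul_apply, smul_eq_mul]
    linear_combination c * hx n j

def simplexInverseLimit : Set (∀ n, Fin (n + 1) → ℝ) :=
  (univ.pi fun n ↦ stdSimplex ℝ (Fin (n + 1))) ∩ simplexThreads ξ

variable {ξ}

theorem apply_eq_apply_of_mem_simplexThreads {x y : ∀ n, Fin (n + 1) → ℝ}
    (hx : x ∈ simplexThreads ξ) (hy : y ∈ simplexThreads ξ) {L m : ℕ} (hLm : L ≤ m)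
    (h : x m = y m) : x L = y L := by
  induction m, hLm using Nat.le_induction with
  | base => exact h
  | succ m _ ih =>
    refine ih (funext fun j ↦ ?_)
    rw [← hx m j, ← hy m j, h]

variable (ξ)

theorem isClosed_simplexThreads : IsClosed (simplexThreads ξ : Set (∀ n, Fin (n + 1) → ℝ)) := by
  have : (simplexThreads ξ : Set (∀ n, Fin (n + 1) → ℝ)) = ⋂ n, ⋂ j : Fin (n + 1),
      {x | x (n + 1) j.castSucc + x (n + 1) (Fin.last (n + 1)) * ξ n j = x n j} := by
    ext x
    simp [simplexThreads]
  rw [this]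
  exact isClosed_iInter fun n ↦ isClosed_iInter fun j ↦ isClosed_eq (by fun_prop) (by fun_prop)

theorem isCompact_simplexInverseLimit : IsCompact (simplexInverseLimit ξ) :=
  (isCompact_univ_pi fun n ↦ isCompact_stdSimplex ℝ (Fin (n + 1))).inter_right
    (isClosed_simplexThreads ξ)

theorem convex_simplexInverseLimit : Convex ℝ (simplexInverseLimit ξ) :=
  (convex_pi fun n _ ↦ convex_stdSimplex ℝ (Fin (n + 1))).inter (simplexThreads ξ).convex

variable {ξ}

theorem tendsto_sum_smul_of_mem_simplexThreads {e : ℕ → ∀ m : ℕ, Fin (m + 1) → ℝ}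
    (he_mem : ∀ n, e n ∈ simplexThreads ξ)
    (he : ∀ n, ∀ m, n ≤ m → ∀ j : Fin (m + 1), e n m j = if (j : ℕ) = n then 1 else 0)
    {x : ∀ n, Fin (n + 1) → ℝ} (hx : x ∈ simplexThreads ξ) :
    Tendsto (fun m ↦ ∑ j : Fin (m + 1), x m j • e j) atTop (𝓝 x) := by
  have hmem : ∀ m, ∑ j : Fin (m + 1), x m j • e j ∈ simplexThreads ξ := fun m ↦
    Submodule.sum_mem _ fun j _ ↦ Submodule.smul_mem _ _ (he_mem j)
  have htop : ∀ m, (∑ j : Fin (m + 1), x m j • e j) m = x m := fun m ↦ by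
    funext k
    simp [Finset.sum_apply, he _ m (Fin.is_le _), Fin.val_eq_val]
  refine tendsto_pi_nhds.2 fun L ↦ tendsto_const_nhds.congr' ?_
  filter_upwards [eventually_ge_atTop L] with m hm
  exact (apply_eq_apply_of_mem_simplexThreads (hmem m) hx hm (htop m)).symm

theorem closedConvexHull_range_eq_simplexInverseLimit {e : ℕ → ∀ m : ℕ, Fin (m + 1) → ℝ}
    (he_mem : ∀ n, e n ∈ simplexInverseLimit ξ)
    (he : ∀ n, ∀ m, n ≤ m → ∀ j : Fin (m + 1), e n m j = if (j : ℕ) = n then 1 else 0) :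
    closedConvexHull ℝ (range e) = simplexInverseLimit ξ := by
  refine (closedConvexHull_min (range_subset_iff.2 he_mem) (convex_simplexInverseLimit ξ)
    (isCompact_simplexInverseLimit ξ).isClosed).antisymm fun x hx ↦ ?_
  refine isClosed_closedConvexHull.mem_of_tendsto
    (tendsto_sum_smul_of_mem_simplexThreads (fun n ↦ (he_mem n).2) he hx.2)
    (Eventually.of_forall fun m ↦ convexHull_subset_closedConvexHull ?_)
  have hxm := hx.1 m (mem_univ m)
  exact (convex_convexHull ℝ _).sum_mem (fun j _ ↦ hxm.1 j) hxm.2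
    fun j _ ↦ subset_convexHull ℝ _ (mem_range_self _)

end SimplexInverseLimit

theorem stmt_6_general (ξ : ∀ n : ℕ, Fin (n + 1) → ℝ)
    (Δ : Set (∀ n, Fin (n + 1) → ℝ))
    (hΔ : Δ = {x | (∀ n, x n ∈ stdSimplex ℝ (Fin (n + 1))) ∧
      ∀ n, ∀ j : Fin (n + 1),
        x (n + 1) j.castSucc + x (n + 1) (Fin.last (n + 1)) * ξ n j = x n j})
    (e : ∀ n : ℕ, ∀ m : ℕ, Fin (m + 1) → ℝ)
    (heΔ : ∀ n, e n ∈ Δ)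
    (he : ∀ n, ∀ m, n ≤ m → ∀ j : Fin (m + 1), e n m j = if (j : ℕ) = n then 1 else 0) :
    Δ.extremePoints ℝ ⊆ closure (Set.range e) := by
  obtain rfl : Δ = simplexInverseLimit ξ := by
    rw [hΔ]
    ext x
    simp [simplexInverseLimit, simplexThreads]
  have hhull := closedConvexHull_range_eq_simplexInverseLimit heΔ he
  rw [← hhull]
  exact extremePoints_closedConvexHull_subset_closure (hhull ▸ isCompact_simplexInverseLimit ξ)

/-- In the inverse limit `Δ` of the standard simplices along the affine maps
`f_n(x)_j = x_j + x_{n+1}·ξ^{(n)}_j`, the elements `e_n` (whose `m`-th coordinate is the `n`-th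
standard basis vector for all `m ≥ n`) are dense in the extreme boundary of `Δ`: every extreme
point of `Δ` lies in the closure of `{e_n : n ∈ ℕ}` (product topology). -/
theorem stmt_6 (ξ : ∀ n : ℕ, Fin (n + 1) → ℝ)
    (hξ : ∀ n, ξ n ∈ stdSimplex ℝ (Fin (n + 1)))
    (Δ : Set (∀ n, Fin (n + 1) → ℝ))
    (hΔ : Δ = {x | (∀ n, x n ∈ stdSimplex ℝ (Fin (n + 1))) ∧
      ∀ n, ∀ j : Fin (n + 1),
        x (n + 1) j.castSucc + x (n + 1) (Fin.last (n + 1)) * ξ n j = x n j})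
    (e : ∀ n : ℕ, ∀ m : ℕ, Fin (m + 1) → ℝ)
    (heΔ : ∀ n, e n ∈ Δ)
    (he : ∀ n, ∀ m, n ≤ m → ∀ j : Fin (m + 1), e n m j = if (j : ℕ) = n then 1 else 0) :
    Δ.extremePoints ℝ ⊆ closure (Set.range e) :=
  stmt_6_general ξ Δ hΔ e heΔ he
end

section
/- Let ξ^{(n)} ∈ stdSimplex ℝ (Fin (n+1)) be an arbitrary sequence of points, n ∈ ℕ. Then there exist positive integers k_n (n ≥ 0) with k_0 = 1, and positive integers m^{(n)}_j (n ≥ 0, 0 ≤ j ≤ n), such that k_{n+1} = Σ_{j=0}^{n} m^{(n)}_j k_j for every n, and such that the points ζ^{(n)} ∈ stdSimplex ℝ (Fin (n+1)) defined by ζ^{(n)}_j = m^{(n)}_j k_j / k_{n+1} satisfy d(ξ^{(n)}, ζ^{(n)}) ≤ 2^{−n} for every n, where d is the Euclidean distance on Fin (n+1) → ℝ. -/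
/-!
Choose `k` recursively. At stage `n`, with `k_0, …, k_n` fixed, pick the multiplicity `m_j` as
the least integer with `m_j k_j > T ξ_j` for a large scale `T`. Then `m_j k_j` overshoots
`T ξ_j` by at most `k_j`, so `k_{n+1} = Σ_j m_j k_j` lies in `(T, T + Σ_j k_j]`, and every
coordinate of `ζ` is within `Σ_j k_j / T` of the corresponding coordinate of `ξ`. Taking `T`
large compared with `Σ_j k_j` makes this error as small as we like.
-/

open Finset

theorem exists_seq_succ_eq_of_prefix {α : Type*} (a : α) (next : ∀ n : ℕ, (Fin (n + 1) → α) → α) :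
    ∃ k : ℕ → α, k 0 = a ∧ ∀ n, k (n + 1) = next n fun j => k j := by
  let k : ℕ → α := Nat.strongRec fun
    | 0, _ => a
    | n + 1, rec => next n fun j => rec j j.isLt
  exact ⟨k, Nat.strongRec_eq _ 0, fun n => Nat.strongRec_eq _ (n + 1)⟩

theorem div_sum_mem_stdSimplex {𝕜 ι : Type*} [Field 𝕜] [LinearOrder 𝕜] [IsStrictOrderedRing 𝕜]
    [Fintype ι] {w : ι → 𝕜} (hw : ∀ j, 0 ≤ w j) (hsum : 0 < ∑ i, w i) :
    (fun j => w j / ∑ i, w i) ∈ stdSimplex 𝕜 ι :=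
  ⟨fun j => div_nonneg (hw j) hsum.le, by rw [← Finset.sum_div, div_self hsum.ne']⟩

theorem nonempty_of_mem_stdSimplex {𝕜 ι : Type*} [Semiring 𝕜] [PartialOrder 𝕜] [Nontrivial 𝕜]
    [Fintype ι] {f : ι → 𝕜} (hf : f ∈ stdSimplex 𝕜 ι) : Nonempty ι := by
  by_contra h
  rw [not_nonempty_iff] at h
  rwa [stdSimplex_of_isEmpty_index] at hf

theorem lt_floor_div_add_one_mul {x q : ℝ} (hq : 0 < q) :
    x < ((⌊x / q⌋₊ + 1 : ℕ) : ℝ) * q := by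
  rw [← div_lt_iff₀ hq]
  exact_mod_cast Nat.lt_floor_add_one (x / q)

theorem floor_div_add_one_mul_le {x q : ℝ} (hx : 0 ≤ x) (hq : 0 < q) :
    ((⌊x / q⌋₊ + 1 : ℕ) : ℝ) * q ≤ x + q := by
  have hfloor := Nat.floor_le (div_nonneg hx hq.le)
  push_cast
  rw [add_mul, one_mul]
  gcongr
  exact (le_div_iff₀ hq).mp hfloor

theorem abs_sub_div_le_of_bounds {x a s K T S : ℝ} (hx : x ∈ Set.Icc 0 1)
    (ha : a ∈ Set.Ioc (T * x) (T * x + s)) (hs : s ≤ S) (hK : K ∈ Set.Ioc T (T + S))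
    (hT : 0 < T) : |x - a / K| ≤ S / T := by
  have hK0 : 0 < K := hT.trans hK.1
  have hnum : |a - x * K| ≤ S := by
    rw [abs_le]
    constructor <;> nlinarith [hx.1, hx.2, ha.1, ha.2, hK.1, hK.2]
  calc |x - a / K| = |a - x * K| / K := by
        rw [abs_sub_comm, ← abs_of_pos hK0, ← abs_div, abs_of_pos hK0, sub_div,
          mul_div_cancel_right₀ _ hK0.ne']
    _ ≤ S / T := div_le_div₀ ((abs_nonneg _).trans hnum) hnum hT hK.1.le

theorem sqrt_sum_sq_le_of_abs_le {ι : Type*} [Fintype ι] {f : ι → ℝ} {ε : ℝ} (hε : 0 ≤ ε)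
    (h : ∀ j, |f j| ≤ ε) : √(∑ j, f j ^ 2) ≤ √(Fintype.card ι) * ε := by
  rw [Real.sqrt_le_iff, mul_pow, Real.sq_sqrt (Nat.cast_nonneg _)]
  refine ⟨by positivity, ?_⟩
  calc ∑ j, f j ^ 2 ≤ (univ : Finset ι).card • ε ^ 2 :=
        sum_le_card_nsmul _ _ _ fun j _ => sq_le_sq' (abs_le.mp (h j)).1 (abs_le.mp (h j)).2
    _ = Fintype.card ι * ε ^ 2 := by rw [card_univ, nsmul_eq_mul]

section SimplexApprox

variable {ι : Type*} [Fintype ι]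

/-- `m_j` is the least integer with `m_j p_j > T ξ_j`, for the scale `T = √|ι| · Σ p / ε`. -/
noncomputable def approxMult (ε : ℝ) (ξ : ι → ℝ) (p : ι → ℕ) (j : ι) : ℕ :=
  ⌊√(Fintype.card ι) * (∑ i, p i) / ε * ξ j / p j⌋₊ + 1

variable {ε : ℝ} {ξ : ι → ℝ} {p : ι → ℕ}

theorem abs_sub_approxMult_le (hξ : ξ ∈ stdSimplex ℝ ι) (hp : ∀ j, 0 < p j) (hε : 0 < ε)
    (j : ι) :
    |ξ j - approxMult ε ξ p j * p j / ∑ i, (approxMult ε ξ p i : ℝ) * p i| ≤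
      ε / √(Fintype.card ι) := by
  have hι : Nonempty ι := nonempty_of_mem_stdSimplex hξ
  set S : ℝ := ∑ i, (p i : ℝ)
  set T : ℝ := √(Fintype.card ι) * S / ε
  have hpR : ∀ i, (0 : ℝ) < p i := fun i => Nat.cast_pos.mpr (hp i)
  have hS : 0 < S := sum_pos (fun i _ => hpR i) univ_nonempty
  have hT : 0 < T := by positivity
  have hlo : ∀ i, T * ξ i < approxMult ε ξ p i * p i := fun i => by
    simpa [approxMult, S, T] using lt_floor_div_add_one_mul (x := T * ξ i) (hpR i)
  have hhi : ∀ i, (approxMult ε ξ p i : ℝ) * p i ≤ T * ξ i + p i := fun i => by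
    simpa [approxMult, S, T] using
      floor_div_add_one_mul_le (mul_nonneg hT.le (hξ.1 i)) (hpR i)
  have hsumT : ∑ i, T * ξ i = T := by rw [← mul_sum, hξ.2, mul_one]
  have hK : ∑ i, (approxMult ε ξ p i : ℝ) * p i ∈ Set.Ioc T (T + S) := by
    constructor
    · exact hsumT ▸ sum_lt_sum_of_nonempty univ_nonempty fun i _ => hlo i
    · calc _ ≤ ∑ i, (T * ξ i + p i) := sum_le_sum fun i _ => hhi i
        _ = T + S := by rw [sum_add_distrib, hsumT]
  have hpS : (p j : ℝ) ≤ S := single_le_sum (fun i _ => (hpR i).le) (mem_univ j)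
  calc _ ≤ S / T := abs_sub_div_le_of_bounds (mem_Icc_of_mem_stdSimplex hξ j)
        ⟨hlo j, hhi j⟩ hpS hK hT
    _ = ε / √(Fintype.card ι) := by
        have : 0 < √(Fintype.card ι : ℝ) := Real.sqrt_pos.mpr (by exact_mod_cast Fintype.card_pos)
        simp only [T]
        field_simp

theorem sqrt_sum_sq_sub_approxMult_le (hξ : ξ ∈ stdSimplex ℝ ι) (hp : ∀ j, 0 < p j)
    (hε : 0 < ε) :
    √(∑ j, (ξ j - approxMult ε ξ p j * p j / ∑ i, (approxMult ε ξ p i : ℝ) * p i) ^ 2) ≤ ε := by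
  have hι : Nonempty ι := nonempty_of_mem_stdSimplex hξ
  have hN : 0 < √(Fintype.card ι : ℝ) := Real.sqrt_pos.mpr (by exact_mod_cast Fintype.card_pos)
  calc _ ≤ √(Fintype.card ι) * (ε / √(Fintype.card ι)) :=
        sqrt_sum_sq_le_of_abs_le (by positivity) (abs_sub_approxMult_le hξ hp hε)
    _ = ε := mul_div_cancel₀ ε hN.ne'

end SimplexApprox

/-- Given any sequence of points `ξ^{(n)}` in the standard simplices, one can choose positive
integers `k_n` (with `k_0 = 1`) and multiplicities `m^{(n)}_j ≥ 1` with
`k_{n+1} = Σ_j m^{(n)}_j k_j`, such that the resulting points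
`ζ^{(n)} = (m^{(n)}_j k_j / k_{n+1})_j` of the simplex satisfy `d(ξ^{(n)}, ζ^{(n)}) ≤ 2^{-n}`
in the Euclidean distance. -/
theorem stmt_8 (ξ : ∀ n : ℕ, Fin (n + 1) → ℝ)
    (hξ : ∀ n, ξ n ∈ stdSimplex ℝ (Fin (n + 1))) :
    ∃ (k : ℕ → ℕ) (m : ∀ n : ℕ, Fin (n + 1) → ℕ),
      k 0 = 1 ∧ (∀ n, 1 ≤ k n) ∧ (∀ n j, 1 ≤ m n j) ∧
      (∀ n, k (n + 1) = ∑ j : Fin (n + 1), m n j * k (j : ℕ)) ∧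
      (∀ n, (fun j : Fin (n + 1) => (m n j : ℝ) * (k (j : ℕ) : ℝ) / (k (n + 1) : ℝ))
        ∈ stdSimplex ℝ (Fin (n + 1))) ∧
      (∀ n, Real.sqrt (∑ j : Fin (n + 1),
          (ξ n j - (m n j : ℝ) * (k (j : ℕ) : ℝ) / (k (n + 1) : ℝ)) ^ 2) ≤ (1 / 2) ^ n) := by
  obtain ⟨k, hk0, hk⟩ := exists_seq_succ_eq_of_prefix 1 fun n p =>
    ∑ j, approxMult ((1 / 2) ^ n) (ξ n) p j * p j
  set m : ∀ n : ℕ, Fin (n + 1) → ℕ := fun n => approxMult ((1 / 2) ^ n) (ξ n) fun j => k j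
  have hm : ∀ n j, 1 ≤ m n j := fun n j => Nat.le_add_left 1 _
  have hk_pos : ∀ n, 1 ≤ k n
    | 0 => hk0.ge
    | n + 1 => calc
        1 ≤ m n 0 * k 0 := by rw [hk0, mul_one]; exact hm n 0
        _ ≤ k (n + 1) := hk n ▸ single_le_sum (f := fun j : Fin (n + 1) => m n j * k j)
          (fun j _ => Nat.zero_le _) (mem_univ 0)
  have hk_real : ∀ n, (k (n + 1) : ℝ) = ∑ j, (m n j : ℝ) * k j := fun n => by
    rw [hk n]; push_cast; rfl
  refine ⟨k, m, hk0, hk_pos, hm, hk, fun n => ?_, fun n => ?_⟩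
  · rw [hk_real n]
    exact div_sum_mem_stdSimplex (fun j => by positivity)
      (hk_real n ▸ Nat.cast_pos.mpr (hk_pos (n + 1)))
  · rw [hk_real n]
    exact sqrt_sum_sq_sub_approxMult_le (hξ n) (fun j => hk_pos j) (by positivity)
end

section
/- Let t : ℕ → ℝ with t_n ≥ 0 for all n, let n_0 be the smallest index with t_{n_0} > 0, and suppose the partial sums Σ_{i=0}^n t_i tend to infinity (i.e. t is not summable). For n ≥ n_0 set ξ^{(n)}_j = t_j / (Σ_{i=0}^n t_i) ∈ stdSimplex ℝ (Fin (n+1)), let ξ^{(n)} be arbitrary in the simplex for n < n_0, define the affine maps f_n(x)_j = x_j + x_{n+1}·ξ^{(n)}_j, and let Δ be the inverse limit of the simplices along the f_n. Let D = {y : ℕ → ℝ : y_j ≥ 0 for all j and Σ_{j=0}^N y_j ≤ 1 for all N}, with the product (pointwise) topology, and define g : D → Π_n (Fin (n+1) → ℝ) by g(y)_n = (y_0, …, y_n) + (1 − Σ_{j=0}^n y_j)·ξ^{(n)} for n ≥ n_0 and g(y)_n = f_n(g(y)_{n+1}) for n < n_0. Then g is a continuous affine bijection from D onto Δ, and hence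 a homeomorphism of D onto Δ. -/
set_option maxHeartbeats 1600000 in
/-- Stationary case with divergent sum: if `t ≥ 0` has divergent partial sums, `n_0` is the
least index with `t_{n_0} > 0`, `ξ^{(n)}_j = t_j / Σ_{i≤n} t_i` for `n ≥ n_0`, and `Δ` is the
inverse limit of the simplices along `f_n(x)_j = x_j + x_{n+1}·ξ^{(n)}_j`, then the natural map
`g` from the Bauer-simplex model `D` to `Δ` is a continuous affine bijection, hence a
homeomorphism of `D` onto `Δ`. -/
theorem stmt_11 (t : ℕ → ℝ) (ht : ∀ n, 0 ≤ t n) (n₀ : ℕ)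
    (hn₀ : 0 < t n₀) (hn₀min : ∀ i, i < n₀ → t i = 0)
    (hdiv : Filter.Tendsto (fun n => ∑ i ∈ Finset.range (n + 1), t i) Filter.atTop Filter.atTop)
    (ξ : ∀ n : ℕ, Fin (n + 1) → ℝ)
    (hξsimplex : ∀ n, ξ n ∈ stdSimplex ℝ (Fin (n + 1)))
    (hξ : ∀ n, n₀ ≤ n → ∀ j : Fin (n + 1),
      ξ n j = t (j : ℕ) / ∑ i ∈ Finset.range (n + 1), t i)
    (Δ : Set (∀ n, Fin (n + 1) → ℝ))
    (hΔ : Δ = {x | (∀ n, x n ∈ stdSimplex ℝ (Fin (n + 1))) ∧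
      ∀ n, ∀ j : Fin (n + 1),
        x (n + 1) j.castSucc + x (n + 1) (Fin.last (n + 1)) * ξ n j = x n j})
    (D : Set (ℕ → ℝ))
    (hD : D = {y | (∀ j, 0 ≤ y j) ∧ ∀ N, ∑ j ∈ Finset.range (N + 1), y j ≤ 1})
    (g : (ℕ → ℝ) → ∀ n, Fin (n + 1) → ℝ)
    (hg₁ : ∀ y n, n₀ ≤ n → ∀ j : Fin (n + 1),
      g y n j = y (j : ℕ) + (1 - ∑ i ∈ Finset.range (n + 1), y i) * ξ n j)
    (hg₂ : ∀ y n, n < n₀ → ∀ j : Fin (n + 1),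
      g y n j = g y (n + 1) j.castSucc + g y (n + 1) (Fin.last (n + 1)) * ξ n j) :
    Set.MapsTo g D Δ ∧
    ContinuousOn g D ∧
    (∀ y ∈ D, ∀ z ∈ D, ∀ a b : ℝ, 0 ≤ a → 0 ≤ b → a + b = 1 →
      ∀ (n : ℕ) (j : Fin (n + 1)),
        g (fun i => a * y i + b * z i) n j = a * g y n j + b * g z n j) ∧
    Set.BijOn g D Δ ∧
    ∃ h : D ≃ₜ Δ, ∀ y : D, (h y : ∀ n, Fin (n + 1) → ℝ) = g y := by
  -- partial sums of t
  have hTpos : ∀ n, n₀ ≤ n → 0 < ∑ i ∈ Finset.range (n + 1), t i := by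
    intro n hn
    exact lt_of_lt_of_le hn₀
      (Finset.single_le_sum (fun i _ => ht i) (Finset.mem_range.mpr (by omega)))
  -- downward induction principle
  have descend : ∀ (P : ℕ → Prop), (∀ m, n₀ ≤ m → P m) → (∀ m, P (m + 1) → P m) → ∀ m, P m := by
    intro P hbase hstep
    have key : ∀ k m, P (m + k) → P m := by
      intro k
      induction k with
      | zero => intro m h; simpa using h
      | succ i ih =>
        intro m h
        exact hstep m (ih (m + 1) (by rwa [show m + 1 + i = m + (i + 1) by omega]))
    intro m
    exact key (n₀ - m) m (hbase _ (by omega))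
  -- compatibility of g with the bonding maps, for every y
  have hcompat : ∀ y n (j : Fin (n + 1)),
      g y (n + 1) j.castSucc + g y (n + 1) (Fin.last (n + 1)) * ξ n j = g y n j := by
    intro y n j
    rcases lt_or_ge n n₀ with h | h
    · exact (hg₂ y n h j).symm
    · have h1 : (∑ i ∈ Finset.range (n + 1), t i) ≠ 0 := ne_of_gt (hTpos n h)
      have h2' : (0:ℝ) < ∑ i ∈ Finset.range (n + 2), t i := hTpos (n + 1) (by omega)
      have h2 : (∑ i ∈ Finset.range (n + 2), t i) ≠ 0 := ne_of_gt h2'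
      rw [hg₁ y (n + 1) (by omega), hg₁ y (n + 1) (by omega), hg₁ y n h,
        hξ n h j, hξ (n + 1) (by omega), hξ (n + 1) (by omega)]
      simp only [Fin.coe_castSucc, Fin.val_last]
      have h3 : ∑ i ∈ Finset.range (n + 2), t i = (∑ i ∈ Finset.range (n + 1), t i) + t (n + 1) :=
        Finset.sum_range_succ t (n + 1)
      have h4 : ∑ i ∈ Finset.range (n + 2), y i = (∑ i ∈ Finset.range (n + 1), y i) + y (n + 1) :=
        Finset.sum_range_succ y (n + 1)
      rw [h3, h4]
      rw [h3] at h2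
      field_simp
      ring
  -- membership of g y n in the simplex
  have hmem : ∀ y ∈ D, ∀ n, g y n ∈ stdSimplex ℝ (Fin (n + 1)) := by
    intro y hy
    rw [hD] at hy
    obtain ⟨hy1, hy2⟩ := hy
    refine descend _ ?_ ?_
    · intro n hn
      constructor
      · intro j
        rw [hg₁ y n hn j]
        have := (hξsimplex n).1 j
        have := hy1 (j : ℕ)
        have := hy2 n
        nlinarith
      · have : ∀ j : Fin (n + 1), g y n j
            = y (j : ℕ) + (1 - ∑ i ∈ Finset.range (n + 1), y i) * ξ n j :=
          fun j => hg₁ y n hn j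
        rw [Finset.sum_congr rfl (fun j _ => this j), Finset.sum_add_distrib,
          ← Finset.mul_sum, (hξsimplex n).2, Fin.sum_univ_eq_sum_range (fun i => y i)]
        ring
    · intro n hnx
      rcases lt_or_ge n n₀ with h | h
      · constructor
        · intro j
          rw [hg₂ y n h j]
          have h1 := hnx.1 j.castSucc
          have h2 := hnx.1 (Fin.last (n + 1))
          have h3 := (hξsimplex n).1 j
          nlinarith
        · have : ∀ j : Fin (n + 1), g y n j
              = g y (n + 1) j.castSucc + g y (n + 1) (Fin.last (n + 1)) * ξ n j :=
            fun j => hg₂ y n h j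
          rw [Finset.sum_congr rfl (fun j _ => this j), Finset.sum_add_distrib,
            ← Finset.mul_sum, (hξsimplex n).2]
          have h4 := hnx.2
          rw [Fin.sum_univ_castSucc (f := g y (n + 1))] at h4
          linarith
      · -- same as base case (already covered)
        constructor
        · intro j
          rw [hg₁ y n h j]
          have := (hξsimplex n).1 j
          have := hy1 (j : ℕ)
          have := hy2 n
          nlinarith
        · have : ∀ j : Fin (n + 1), g y n j
              = y (j : ℕ) + (1 - ∑ i ∈ Finset.range (n + 1), y i) * ξ n j :=
            fun j => hg₁ y n h j
          rw [Finset.sum_congr rfl (fun j _ => this j), Finset.sum_add_distrib,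
            ← Finset.mul_sum, (hξsimplex n).2, Fin.sum_univ_eq_sum_range (fun i => y i)]
          ring
  -- affinity of g (for any y z, no membership needed)
  have haff : ∀ (y z : ℕ → ℝ) (a b : ℝ), a + b = 1 →
      ∀ (n : ℕ) (j : Fin (n + 1)),
        g (fun i => a * y i + b * z i) n j = a * g y n j + b * g z n j := by
    intro y z a b hab
    refine descend (fun n => ∀ j : Fin (n + 1),
      g (fun i => a * y i + b * z i) n j = a * g y n j + b * g z n j) ?_ ?_
    · intro n hn j
      rw [hg₁ _ n hn j, hg₁ y n hn j, hg₁ z n hn j, Finset.sum_add_distrib,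
        ← Finset.mul_sum, ← Finset.mul_sum]
      linear_combination (- ξ n j) * hab
    · intro n ih
      rcases lt_or_ge n n₀ with h | h
      · intro j
        rw [hg₂ _ n h j, hg₂ y n h j, hg₂ z n h j, ih j.castSucc, ih (Fin.last (n + 1))]
        ring
      · intro j
        rw [hg₁ _ n h j, hg₁ y n h j, hg₁ z n h j, Finset.sum_add_distrib,
          ← Finset.mul_sum, ← Finset.mul_sum]
        linear_combination (- ξ n j) * hab
  -- continuity of g (globally)
  have hcont : ∀ (n : ℕ) (j : Fin (n + 1)), Continuous fun y : ℕ → ℝ => g y n j := by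
    refine descend (fun n => ∀ j : Fin (n + 1), Continuous fun y : ℕ → ℝ => g y n j) ?_ ?_
    · intro n hn j
      have c1 : Continuous fun y : ℕ → ℝ => ∑ i ∈ Finset.range (n + 1), y i :=
        continuous_finset_sum _ fun i _ => continuous_apply i
      exact ((continuous_apply (j : ℕ)).add
        ((continuous_const.sub c1).mul continuous_const)).congr
        fun y => (hg₁ y n hn j).symm
    · intro n ih
      rcases lt_or_ge n n₀ with h | h
      · intro j
        exact ((ih j.castSucc).add ((ih (Fin.last (n + 1))).mul continuous_const)).congr
          fun y => (hg₂ y n h j).symm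
      · intro n'
        have c1 : Continuous fun y : ℕ → ℝ => ∑ i ∈ Finset.range (n + 1), y i :=
          continuous_finset_sum _ fun i _ => continuous_apply i
        exact ((continuous_apply ((n' : Fin (n+1)) : ℕ)).add
          ((continuous_const.sub c1).mul continuous_const)).congr
          fun y => (hg₁ y n h n').symm
  have hgcont : Continuous g := continuous_pi fun n => continuous_pi fun j => hcont n j
  -- injectivity on D
  have hinj : Set.InjOn g D := by
    intro y hy z hz hgyz
    rw [hD] at hy hz
    funext j
    set n := max n₀ j with hn
    have hshift : Filter.Tendsto (fun m : ℕ => m + n) Filter.atTop Filter.atTop :=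
      Filter.tendsto_atTop_mono (fun m => Nat.le_add_right m n) Filter.tendsto_id
    have hTcomp : Filter.Tendsto (fun m => ∑ i ∈ Finset.range (m + n + 1), t i)
        Filter.atTop Filter.atTop := hdiv.comp hshift
    have hbound : Filter.Tendsto (fun m => t j / ∑ i ∈ Finset.range (m + n + 1), t i)
        Filter.atTop (nhds 0) :=
      Filter.Tendsto.div_atTop tendsto_const_nhds hTcomp
    have hA : ∀ (w : ℕ → ℝ), (∀ i, 0 ≤ w i) → (∀ N, ∑ i ∈ Finset.range (N + 1), w i ≤ 1) →
        Filter.Tendsto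
          (fun m => (1 - ∑ i ∈ Finset.range (m + n + 1), w i) * ξ (m + n) ⟨j, by omega⟩)
          Filter.atTop (nhds 0) := by
      intro w hw1 hw2
      apply squeeze_zero (g := fun m => t j / ∑ i ∈ Finset.range (m + n + 1), t i)
      · intro m
        have h1 : (0:ℝ) ≤ 1 - ∑ i ∈ Finset.range (m + n + 1), w i := by
          have := hw2 (m + n); linarith
        exact mul_nonneg h1 ((hξsimplex (m + n)).1 _)
      · intro m
        have h1 : (1 - ∑ i ∈ Finset.range (m + n + 1), w i) ≤ 1 := by
          have : (0:ℝ) ≤ ∑ i ∈ Finset.range (m + n + 1), w i :=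
            Finset.sum_nonneg fun i _ => hw1 i
          linarith
        have h2 : ξ (m + n) ⟨j, by omega⟩ = t j / ∑ i ∈ Finset.range (m + n + 1), t i := by
          rw [hξ (m + n) (by omega) ⟨j, by omega⟩]
        have h3 : (0:ℝ) ≤ t j / ∑ i ∈ Finset.range (m + n + 1), t i :=
          div_nonneg (ht j) (le_of_lt (hTpos (m + n) (by omega)))
        calc (1 - ∑ i ∈ Finset.range (m + n + 1), w i) * ξ (m + n) ⟨j, by omega⟩
            = (1 - ∑ i ∈ Finset.range (m + n + 1), w i)
              * (t j / ∑ i ∈ Finset.range (m + n + 1), t i) := by rw [h2]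
          _ ≤ 1 * (t j / ∑ i ∈ Finset.range (m + n + 1), t i) := by
              apply mul_le_mul_of_nonneg_right h1 h3
          _ = t j / ∑ i ∈ Finset.range (m + n + 1), t i := one_mul _
      · exact hbound
    have h1 : Filter.Tendsto
        (fun m => y j + (1 - ∑ i ∈ Finset.range (m + n + 1), y i) * ξ (m + n) ⟨j, by omega⟩)
        Filter.atTop (nhds (y j)) := by
      simpa using tendsto_const_nhds.add (hA y hy.1 hy.2)
    have h2 : Filter.Tendsto
        (fun m => z j + (1 - ∑ i ∈ Finset.range (m + n + 1), z i) * ξ (m + n) ⟨j, by omega⟩)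
        Filter.atTop (nhds (z j)) := by
      simpa using tendsto_const_nhds.add (hA z hz.1 hz.2)
    have heq : (fun m => y j + (1 - ∑ i ∈ Finset.range (m + n + 1), y i) * ξ (m + n) ⟨j, by omega⟩)
        = fun m => z j + (1 - ∑ i ∈ Finset.range (m + n + 1), z i) * ξ (m + n) ⟨j, by omega⟩ := by
      funext m
      have e1 := hg₁ y (m + n) (by omega) ⟨j, by omega⟩
      have e2 := hg₂
      have e3 := hg₁ z (m + n) (by omega) ⟨j, by omega⟩
      rw [← e1, ← e3, hgyz]
    exact tendsto_nhds_unique (heq ▸ h1) h2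
  -- surjectivity onto Δ
  have hsurj : Set.SurjOn g D Δ := by
    intro x hx
    rw [hΔ] at hx
    obtain ⟨hx1, hx2⟩ := hx
    -- coordinates are antitone along the tower
    have hdec : ∀ (m : ℕ) (j : Fin (m + 1)), x (m + 1) j.castSucc ≤ x m j := by
      intro m j
      have h := hx2 m j
      have h1 := (hx1 (m + 1)).1 (Fin.last (m + 1))
      have h2 := (hξsimplex m).1 j
      nlinarith
    have xcast : ∀ (a b : ℕ), a = b → ∀ (j : ℕ) (h : j < a + 1) (h' : j < b + 1),
        x a ⟨j, h⟩ = x b ⟨j, h'⟩ := by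
      rintro a b rfl j h h'; rfl
    -- the limit function y
    obtain ⟨y, hy_spec⟩ : ∃ y : ℕ → ℝ, ∀ j, y j
        = ⨅ m, x (j + m) ⟨j, Nat.lt_succ_of_le (Nat.le_add_right j m)⟩ :=
      ⟨_, fun j => rfl⟩
    have hanti : ∀ j, Antitone (fun m => x (j + m)
        ⟨j, Nat.lt_succ_of_le (Nat.le_add_right j m)⟩) := by
      intro j
      apply antitone_nat_of_succ_le
      intro m
      exact hdec (j + m) ⟨j, Nat.lt_succ_of_le (Nat.le_add_right j m)⟩
    have hbdd : ∀ j, BddBelow (Set.range (fun m => x (j + m)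
        ⟨j, Nat.lt_succ_of_le (Nat.le_add_right j m)⟩)) := by
      intro j
      refine ⟨0, ?_⟩
      rintro r ⟨m, rfl⟩
      exact (hx1 _).1 _
    have hy_tend : ∀ j, Filter.Tendsto (fun m => x (j + m)
        ⟨j, Nat.lt_succ_of_le (Nat.le_add_right j m)⟩) Filter.atTop (nhds (y j)) := by
      intro j
      rw [hy_spec j]
      exact tendsto_atTop_ciInf (hanti j) (hbdd j)
    -- the pointwise limit over the shifted sequences
    have hconv : ∀ (n j : ℕ) (hj : j ≤ n), Filter.Tendsto
        (fun m => x (n + m) ⟨j, by omega⟩) Filter.atTop (nhds (y j)) := by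
      intro n j hj
      set v : ℕ → ℝ := fun M => if h : j < M + 1 then x M ⟨j, h⟩ else 0 with hv_def
      have hv : Filter.Tendsto v Filter.atTop (nhds (y j)) := by
        apply (Filter.tendsto_add_atTop_iff_nat j).mp
        have hfe : (fun m => v (m + j)) = fun m => x (j + m)
            ⟨j, Nat.lt_succ_of_le (Nat.le_add_right j m)⟩ := by
          funext m
          rw [hv_def]
          simp only
          rw [dif_pos (by omega)]
          exact xcast (m + j) (j + m) (by omega) j (by omega) _
        rw [hfe]
        exact hy_tend j
      have hfe2 : (fun m => x (n + m) ⟨j, by omega⟩) = fun m => v (n + m) := by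
        funext m
        rw [hv_def]
        simp only
        rw [dif_pos (by omega)]
      rw [hfe2]
      exact hv.comp (Filter.tendsto_atTop_mono (fun m => Nat.le_add_left m n) Filter.tendsto_id)
    -- explicit formula along the tower
    have hform : ∀ n, n₀ ≤ n → ∀ m, ∀ j : Fin (n + 1),
        x n j = x (n + m) ⟨j, by omega⟩
          + (1 - ∑ i : Fin (n + 1), x (n + m) ⟨i, by omega⟩)
            * (t j / ∑ i ∈ Finset.range (n + 1), t i) := by
      intro n hn m
      induction m with
      | zero =>
        intro j
        have h1 : ∀ i : Fin (n + 1), x (n + 0) ⟨(i : ℕ), by omega⟩ = x n i := by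
          intro i
          exact congrArg (x n) (Fin.ext rfl)
        rw [h1 j, Finset.sum_congr rfl (fun i _ => h1 i), (hx1 n).2]
        ring
      | succ m ih =>
        intro j
        have hTn : (∑ i ∈ Finset.range (n + 1), t i) ≠ 0 := ne_of_gt (hTpos n hn)
        have hTm : (∑ i ∈ Finset.range (n + m + 1), t i) ≠ 0 :=
          ne_of_gt (hTpos (n + m) (by omega))
        have key : ∀ i : Fin (n + 1), x (n + m) ⟨(i : ℕ), by omega⟩
            = x (n + (m + 1)) ⟨(i : ℕ), by omega⟩
              + x (n + (m + 1)) (Fin.last (n + m + 1))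
                * (t i / ∑ i ∈ Finset.range (n + m + 1), t i) := by
          intro i
          have h := hx2 (n + m) ⟨(i : ℕ), by omega⟩
          rw [hξ (n + m) (by omega) ⟨(i : ℕ), by omega⟩] at h
          exact h.symm
        rw [ih j, key j, Finset.sum_congr rfl (fun i _ => key i), Finset.sum_add_distrib,
          ← Finset.mul_sum, ← Finset.sum_div, Fin.sum_univ_eq_sum_range (fun i => t i)]
        field_simp
        ring
    -- y belongs to D
    have hyD : y ∈ D := by
      rw [hD]
      constructor
      · intro j
        rw [hy_spec j]
        exact le_ciInf fun m => (hx1 _).1 _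
      · intro N
        have hsum_tend : Filter.Tendsto
            (fun m => ∑ i : Fin (N + 1), x (N + m) ⟨(i : ℕ), by omega⟩)
            Filter.atTop (nhds (∑ i : Fin (N + 1), y (i : ℕ))) :=
          tendsto_finset_sum _ fun i _ => hconv N i (by omega)
        have hb : ∀ m, ∑ i : Fin (N + 1), x (N + m) ⟨(i : ℕ), by omega⟩ ≤ 1 := by
          intro m
          have hle : ∑ i : Fin (N + 1), x (N + m) ⟨(i : ℕ), by omega⟩
              = ∑ i ∈ Finset.univ.map (Fin.castLEEmb (by omega : N + 1 ≤ N + m + 1)),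
                  x (N + m) i := by
            rw [Finset.sum_map]
            exact Finset.sum_congr rfl fun i _ => congrArg (x (N + m)) (Fin.ext (by simp))
          rw [hle]
          calc ∑ i ∈ Finset.univ.map (Fin.castLEEmb (by omega : N + 1 ≤ N + m + 1)), x (N + m) i
              ≤ ∑ i : Fin (N + m + 1), x (N + m) i :=
                Finset.sum_le_sum_of_subset_of_nonneg (Finset.subset_univ _)
                  (fun i _ _ => (hx1 (N + m)).1 i)
            _ = 1 := (hx1 (N + m)).2
        have := le_of_tendsto hsum_tend (Filter.Eventually.of_forall hb)
        rwa [Fin.sum_univ_eq_sum_range (fun i => y i)] at this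
    -- g y = x
    have hbase : ∀ n, n₀ ≤ n → ∀ j : Fin (n + 1), g y n j = x n j := by
      intro n hn j
      have h1 : Filter.Tendsto (fun m => x (n + m) ⟨(j : ℕ), by omega⟩)
          Filter.atTop (nhds (y (j : ℕ))) := hconv n j (by omega)
      have h2 : Filter.Tendsto
          (fun m => ∑ i : Fin (n + 1), x (n + m) ⟨(i : ℕ), by omega⟩)
          Filter.atTop (nhds (∑ i : Fin (n + 1), y (i : ℕ))) :=
        tendsto_finset_sum _ fun i _ => hconv n i (by omega)
      have h3 : Filter.Tendsto
          (fun m => x (n + m) ⟨(j : ℕ), by omega⟩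
            + (1 - ∑ i : Fin (n + 1), x (n + m) ⟨(i : ℕ), by omega⟩)
              * (t j / ∑ i ∈ Finset.range (n + 1), t i))
          Filter.atTop
          (nhds (y j + (1 - ∑ i : Fin (n + 1), y (i : ℕ))
            * (t j / ∑ i ∈ Finset.range (n + 1), t i))) :=
        h1.add ((tendsto_const_nhds.sub h2).mul tendsto_const_nhds)
      have h4 : Filter.Tendsto (fun _ : ℕ => x n j) Filter.atTop
          (nhds (y j + (1 - ∑ i : Fin (n + 1), y (i : ℕ))
            * (t j / ∑ i ∈ Finset.range (n + 1), t i))) :=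
        h3.congr fun m => (hform n hn m j).symm
      have hxval : x n j = y j + (1 - ∑ i : Fin (n + 1), y (i : ℕ))
          * (t j / ∑ i ∈ Finset.range (n + 1), t i) :=
        tendsto_nhds_unique tendsto_const_nhds h4
      rw [hg₁ y n hn j, hξ n hn j, hxval,
      Fin.sum_univ_eq_sum_range (fun i => y i)]
    have hgyx : ∀ n (j : Fin (n + 1)), g y n j = x n j := by
      refine descend (fun n => ∀ j : Fin (n + 1), g y n j = x n j) hbase ?_
      intro n ih
      rcases lt_or_ge n n₀ with h | h
      · intro j
        rw [hg₂ y n h j, ih j.castSucc, ih (Fin.last (n + 1)), hx2 n j]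
      · exact hbase n h
    exact ⟨y, hyD, funext fun n => funext fun j => hgyx n j⟩
  -- assembly
  have hmaps : Set.MapsTo g D Δ := by
    intro y hy
    rw [hΔ]
    exact ⟨hmem y hy, fun n j => hcompat y n j⟩
  have hbij : Set.BijOn g D Δ := ⟨hmaps, hinj, hsurj⟩
  refine ⟨hmaps, hgcont.continuousOn, fun y _ z _ a b _ _ hab n j => haff y z a b hab n j,
    hbij, ?_⟩
  -- D is compact
  have hDclosed : IsClosed D := by
    rw [hD]
    have hset : {y : ℕ → ℝ | (∀ j, 0 ≤ y j) ∧ ∀ N, ∑ j ∈ Finset.range (N + 1), y j ≤ 1}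
        = (⋂ j, {y : ℕ → ℝ | 0 ≤ y j})
          ∩ ⋂ N, {y : ℕ → ℝ | ∑ j ∈ Finset.range (N + 1), y j ≤ 1} := by
      ext y
      simp [Set.mem_iInter]
    rw [hset]
    exact (isClosed_iInter fun j => isClosed_le continuous_const (continuous_apply j)).inter
      (isClosed_iInter fun N =>
        isClosed_le (continuous_finset_sum _ fun i _ => continuous_apply i) continuous_const)
  have hDsub : D ⊆ Set.univ.pi (fun _ : ℕ => Set.Icc (0:ℝ) 1) := by
    intro y hy
    rw [hD] at hy
    intro j _
    refine ⟨hy.1 j, ?_⟩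
    calc y j ≤ ∑ i ∈ Finset.range (j + 1), y i :=
          Finset.single_le_sum (fun i _ => hy.1 i) (Finset.mem_range.mpr (by omega))
      _ ≤ 1 := hy.2 j
  have hDcomp : IsCompact D :=
    (isCompact_univ_pi fun _ => isCompact_Icc).of_isClosed_subset hDclosed hDsub
  haveI : CompactSpace D := isCompact_iff_compactSpace.mp hDcomp
  have hce : Continuous (hbij.equiv g : D → Δ) := Continuous.restrict hbij.mapsTo hgcont
  exact ⟨hce.homeoOfEquivCompactToT2, fun y => rfl⟩
end

section
/- For each n ∈ ℕ let ξ^{(n)} ∈ stdSimplex ℝ (Fin (n+1)), and suppose that for each fixed i ∈ ℕ the coordinates satisfy ξ^{(n)}_i → 0 as n → ∞. Let D = {y : ℕ → ℝ : y_j ≥ 0 for all j and Σ_{j=0}^N y_j ≤ 1 for all N}. If y, z ∈ D satisfy, for all sufficiently large n, the identity (y_0, …, y_n) + (1 − Σ_{j=0}^n y_j)·ξ^{(n)} = (z_0, …, z_n) + (1 − Σ_{j=0}^n z_j)·ξ^{(n)} in Fin (n+1) → ℝ, then y = z. -/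
/-- Injectivity lemma: if the coordinates of `ξ^{(n)}` tend to `0` in each fixed index `i`,
and two elements `y, z` of the Bauer-simplex model `D` have equal images under the affine maps
into the simplices determined by `ξ^{(n)}` for all large `n`, then `y = z`. -/
theorem stmt_12 (ξ : ∀ n : ℕ, Fin (n + 1) → ℝ)
    (hξsimplex : ∀ n, ξ n ∈ stdSimplex ℝ (Fin (n + 1)))
    (hξ0 : ∀ i : ℕ, Filter.Tendsto
      (fun n => if h : i < n + 1 then ξ n ⟨i, h⟩ else 0) Filter.atTop (nhds 0))
    (D : Set (ℕ → ℝ))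
    (hD : D = {y | (∀ j, 0 ≤ y j) ∧ ∀ N, ∑ j ∈ Finset.range (N + 1), y j ≤ 1})
    (y z : ℕ → ℝ) (hy : y ∈ D) (hz : z ∈ D)
    (heq : ∃ N : ℕ, ∀ n, N ≤ n → ∀ j : Fin (n + 1),
      y (j : ℕ) + (1 - ∑ i ∈ Finset.range (n + 1), y i) * ξ n j =
      z (j : ℕ) + (1 - ∑ i ∈ Finset.range (n + 1), z i) * ξ n j) :
    y = z := by
  subst hD
  obtain ⟨hy0, hy1⟩ := hy
  obtain ⟨hz0, hz1⟩ := hz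
  obtain ⟨N, hN⟩ := heq
  funext i
  -- show |y i - z i| ≤ |ξ n i| eventually
  have hev : ∀ᶠ n in Filter.atTop, |y i - z i| ≤
      |if h : i < n + 1 then ξ n ⟨i, h⟩ else 0| := by
    filter_upwards [Filter.eventually_ge_atTop (max N i)] with n hn
    have hNn : N ≤ n := le_trans (le_max_left _ _) hn
    have hin : i < n + 1 := Nat.lt_succ_of_le (le_trans (le_max_right _ _) hn)
    rw [dif_pos hin]
    have h := hN n hNn ⟨i, hin⟩
    simp only at h
    have key : y i - z i =
        ((∑ j ∈ Finset.range (n + 1), y j) - ∑ j ∈ Finset.range (n + 1), z j) *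
          ξ n ⟨i, hin⟩ := by linarith [h]
    have hsy0 : 0 ≤ ∑ j ∈ Finset.range (n + 1), y j :=
      Finset.sum_nonneg fun j _ => hy0 j
    have hsz0 : 0 ≤ ∑ j ∈ Finset.range (n + 1), z j :=
      Finset.sum_nonneg fun j _ => hz0 j
    have hb : |(∑ j ∈ Finset.range (n + 1), y j) - ∑ j ∈ Finset.range (n + 1), z j| ≤ 1 := by
      rw [abs_le]
      constructor <;> [linarith [hy1 n, hz1 n]; linarith [hy1 n, hz1 n]]
    calc |y i - z i| = |(∑ j ∈ Finset.range (n + 1), y j) - ∑ j ∈ Finset.range (n + 1), z j| *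
          |ξ n ⟨i, hin⟩| := by rw [key, abs_mul]
      _ ≤ 1 * |ξ n ⟨i, hin⟩| := by
          apply mul_le_mul_of_nonneg_right hb (abs_nonneg _)
      _ = |ξ n ⟨i, hin⟩| := one_mul _
  have htend : Filter.Tendsto
      (fun n => |if h : i < n + 1 then ξ n ⟨i, h⟩ else 0|) Filter.atTop (nhds 0) := by
    simpa using (hξ0 i).abs
  have : |y i - z i| ≤ 0 := ge_of_tendsto htend hev
  have := abs_nonneg (y i - z i)
  have : |y i - z i| = 0 := le_antisymm ‹|y i - z i| ≤ 0› this
  have := abs_eq_zero.mp this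
  linarith
end

section
/- Let t : ℕ → ℝ with t_n ≥ 0 for all n, not identically zero, and let n_0 be the least index with t_{n_0} > 0. For n ≥ n_0 set ξ^{(n)}_j = t_j / (Σ_{i=0}^n t_i) ∈ stdSimplex ℝ (Fin (n+1)), let ξ^{(n)} be arbitrary in the simplex for n < n_0, define f_n(x)_j = x_j + x_{n+1}·ξ^{(n)}_j, and let Δ be the inverse limit with coordinate projections f_{∞,m} and with elements e_n ∈ Δ characterized by f_{∞,m}(e_n) = e_n^{(m)} for m ≥ n. Then there exists a unique e_∞ ∈ Δ with f_{∞,n}(e_∞) = ξ^{(n)} for all n ≥ n_0; moreover f_{∞,m}(e_n) = ξ^{(m)} whenever n > m ≥ n_0, and consequently e_n → e_∞ in Δ (in the product topology) as n → ∞. -/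
lemma agree_below_aux (ξ x y : ∀ n : ℕ, Fin (n + 1) → ℝ)
    (hx : ∀ n, ∀ j : Fin (n + 1),
      x (n + 1) j.castSucc + x (n + 1) (Fin.last (n + 1)) * ξ n j = x n j)
    (hy : ∀ n, ∀ j : Fin (n + 1),
      y (n + 1) j.castSucc + y (n + 1) (Fin.last (n + 1)) * ξ n j = y n j) :
    ∀ d m, x (m + d) = y (m + d) → x m = y m := by
  intro d
  induction d with
  | zero => intro m h; simpa using h
  | succ d ih =>
    intro m h
    have h1 : x (m + 1) = y (m + 1) := ih (m + 1) (by rw [show m + 1 + d = m + (d+1) by omega]; exact h)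
    funext j
    rw [← hx m j, ← hy m j, h1]

lemma xi_compat_aux (t : ℕ → ℝ) (ht : ∀ n, 0 ≤ t n) (n₀ : ℕ) (hn₀ : 0 < t n₀)
    (ξ : ∀ n : ℕ, Fin (n + 1) → ℝ)
    (hξ : ∀ n, n₀ ≤ n → ∀ j : Fin (n + 1),
      ξ n j = t (j : ℕ) / ∑ i ∈ Finset.range (n + 1), t i)
    (m : ℕ) (hm : n₀ ≤ m) (j : Fin (m + 1)) :
    ξ (m + 1) j.castSucc + ξ (m + 1) (Fin.last (m + 1)) * ξ m j = ξ m j := by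
  have hS : ∀ k, n₀ ≤ k → 0 < ∑ i ∈ Finset.range (k + 1), t i := by
    intro k hk
    exact Finset.sum_pos' (fun i _ => ht i) ⟨n₀, Finset.mem_range.2 (by omega), hn₀⟩
  have h1 := hS m hm
  have h2 := hS (m + 1) (by omega)
  rw [hξ (m+1) (by omega), hξ (m+1) (by omega), hξ m hm]
  simp only [Fin.coe_castSucc, Fin.val_last]
  rw [Finset.sum_range_succ (n := m + 1)] at h2 ⊢
  field_simp

lemma e_key_aux (t : ℕ → ℝ) (ht : ∀ n, 0 ≤ t n) (n₀ : ℕ) (hn₀ : 0 < t n₀)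
    (ξ : ∀ n : ℕ, Fin (n + 1) → ℝ)
    (hξ : ∀ n, n₀ ≤ n → ∀ j : Fin (n + 1),
      ξ n j = t (j : ℕ) / ∑ i ∈ Finset.range (n + 1), t i)
    (e : ℕ → ∀ m : ℕ, Fin (m + 1) → ℝ)
    (hecompat : ∀ n k, ∀ j : Fin (k + 1),
      e n (k + 1) j.castSucc + e n (k + 1) (Fin.last (k + 1)) * ξ k j = e n k j)
    (he : ∀ n, ∀ m, n ≤ m → ∀ j : Fin (m + 1), e n m j = if (j : ℕ) = n then 1 else 0) :
    ∀ d m, n₀ ≤ m → e (m + d + 1) m = ξ m := by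
  intro d
  induction d with
  | zero =>
    intro m hm
    funext j
    have h := hecompat (m + 1) m j
    rw [he (m+1) (m+1) le_rfl, he (m+1) (m+1) le_rfl] at h
    have hj : (j : ℕ) ≠ m + 1 := by omega
    simp [hj] at h
    exact h.symm
  | succ d ih =>
    intro m hm
    funext j
    have h := hecompat (m + d + 2) m j
    have h1 : e (m + d + 2) (m + 1) = ξ (m + 1) := by
      have := ih (m + 1) (by omega)
      rwa [show m + 1 + d + 1 = m + d + 2 by omega] at this
    rw [h1] at h
    show e (m + d + 2) m j = ξ m j
    rw [← h]
    exact xi_compat_aux t ht n₀ hn₀ ξ hξ m hm j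

noncomputable def eInfAux (n₀ : ℕ) (ξ : ∀ n : ℕ, Fin (n + 1) → ℝ)
    (e : ℕ → ∀ m : ℕ, Fin (m + 1) → ℝ) : ∀ m : ℕ, Fin (m + 1) → ℝ :=
  fun m => if n₀ ≤ m then ξ m else e (n₀ + 1) m

lemma eInfAux_of_le (n₀ : ℕ) (ξ : ∀ n : ℕ, Fin (n + 1) → ℝ)
    (e : ℕ → ∀ m : ℕ, Fin (m + 1) → ℝ) {m : ℕ} (h : n₀ ≤ m) :
    eInfAux n₀ ξ e m = ξ m := by simp [eInfAux, h]

lemma eInfAux_of_lt (n₀ : ℕ) (ξ : ∀ n : ℕ, Fin (n + 1) → ℝ)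
    (e : ℕ → ∀ m : ℕ, Fin (m + 1) → ℝ) {m : ℕ} (h : m < n₀) :
    eInfAux n₀ ξ e m = e (n₀ + 1) m := by simp [eInfAux, Nat.not_le.2 h]



/-- Stationary case: there is a unique `e_∞ ∈ Δ` with `f_{∞,n}(e_∞) = ξ^{(n)}` for all
`n ≥ n_0`; moreover `f_{∞,m}(e_n) = ξ^{(m)}` whenever `n > m ≥ n_0`, and consequently
`e_n → e_∞` in the product topology. -/
theorem stmt_14 (t : ℕ → ℝ) (ht : ∀ n, 0 ≤ t n) (n₀ : ℕ)
    (hn₀ : 0 < t n₀) (hn₀min : ∀ i, i < n₀ → t i = 0)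
    (ξ : ∀ n : ℕ, Fin (n + 1) → ℝ)
    (hξsimplex : ∀ n, ξ n ∈ stdSimplex ℝ (Fin (n + 1)))
    (hξ : ∀ n, n₀ ≤ n → ∀ j : Fin (n + 1),
      ξ n j = t (j : ℕ) / ∑ i ∈ Finset.range (n + 1), t i)
    (Δ : Set (∀ n, Fin (n + 1) → ℝ))
    (hΔ : Δ = {x | (∀ n, x n ∈ stdSimplex ℝ (Fin (n + 1))) ∧
      ∀ n, ∀ j : Fin (n + 1),
        x (n + 1) j.castSucc + x (n + 1) (Fin.last (n + 1)) * ξ n j = x n j})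
    (e : ℕ → ∀ m : ℕ, Fin (m + 1) → ℝ)
    (heΔ : ∀ n, e n ∈ Δ)
    (he : ∀ n, ∀ m, n ≤ m → ∀ j : Fin (m + 1), e n m j = if (j : ℕ) = n then 1 else 0) :
    ∃ eInf : ∀ m : ℕ, Fin (m + 1) → ℝ,
      (eInf ∈ Δ ∧ ∀ n, n₀ ≤ n → eInf n = ξ n) ∧
      (∀ e' : ∀ m : ℕ, Fin (m + 1) → ℝ,
        (e' ∈ Δ ∧ ∀ n, n₀ ≤ n → e' n = ξ n) → e' = eInf) ∧
      (∀ n m : ℕ, m < n → n₀ ≤ m → e n m = ξ m) ∧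
      Filter.Tendsto e Filter.atTop (nhds eInf) := by
  simp only [hΔ, Set.mem_setOf_eq] at heΔ ⊢
  -- the key fact
  have key : ∀ n m : ℕ, m < n → n₀ ≤ m → e n m = ξ m := by
    intro n m h1 h2
    have := e_key_aux t ht n₀ hn₀ ξ hξ e (fun n k j => (heΔ n).2 k j) he (n - m - 1) m h2
    rwa [show m + (n - m - 1) + 1 = n by omega] at this
  set eInf := eInfAux n₀ ξ e with heInf
  -- compatibility of eInf
  have hcompInf : ∀ n, ∀ j : Fin (n + 1),
      eInf (n + 1) j.castSucc + eInf (n + 1) (Fin.last (n + 1)) * ξ n j = eInf n j := by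
    intro n j
    rcases le_or_gt n₀ n with h | h
    · rw [heInf, eInfAux_of_le n₀ ξ e (by omega : n₀ ≤ n + 1), eInfAux_of_le n₀ ξ e h]
      exact xi_compat_aux t ht n₀ hn₀ ξ hξ n h j
    · have h1 : eInf (n + 1) = e (n₀ + 1) (n + 1) := by
        rcases eq_or_lt_of_le (Nat.succ_le_of_lt h) with hc | hc
        · rw [heInf, eInfAux_of_le n₀ ξ e (le_of_eq hc.symm)]
          exact (key (n₀ + 1) (n + 1) (by omega) (by omega)).symm
        · rw [heInf, eInfAux_of_lt n₀ ξ e hc]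
      rw [h1, heInf, eInfAux_of_lt n₀ ξ e h]
      exact (heΔ (n₀ + 1)).2 n j
  have hInfn₀ : ∀ m, n₀ ≤ m → eInf m = ξ m := fun m h => eInfAux_of_le n₀ ξ e h
  refine ⟨eInf, ⟨⟨?_, hcompInf⟩, hInfn₀⟩, ?_, key, ?_⟩
  · -- simplex membership
    intro n
    rcases le_or_gt n₀ n with h | h
    · rw [hInfn₀ n h]; exact hξsimplex n
    · rw [heInf, eInfAux_of_lt n₀ ξ e h]; exact (heΔ (n₀ + 1)).1 n
  · -- uniqueness
    rintro e' ⟨⟨-, hcomp'⟩, he'⟩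
    funext m
    rcases le_or_gt n₀ m with h | h
    · rw [he' m h, hInfn₀ m h]
    · have := agree_below_aux ξ e' eInf hcomp' hcompInf (n₀ - m) m
      rw [show m + (n₀ - m) = n₀ by omega] at this
      exact this (by rw [he' n₀ le_rfl, hInfn₀ n₀ le_rfl])
  · -- convergence
    rw [tendsto_pi_nhds]
    intro m
    have hev : (fun _ : ℕ => eInf m) =ᶠ[Filter.atTop] fun n => e n m := by
      filter_upwards [Filter.eventually_ge_atTop (max (m + 1) (n₀ + 1))] with n hn
      rcases le_or_gt n₀ m with h | h
      · rw [hInfn₀ m h, key n m (by omega) h]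
      · have h1 : e n m = e (n₀ + 1) m := by
          have := agree_below_aux ξ (e n) (e (n₀ + 1)) (heΔ n).2 (heΔ (n₀ + 1)).2 (n₀ - m) m
          rw [show m + (n₀ - m) = n₀ by omega] at this
          exact this (by rw [key n n₀ (by omega) le_rfl, key (n₀ + 1) n₀ (by omega) le_rfl])
        rw [heInf, eInfAux_of_lt n₀ ξ e h, h1]
    exact Filter.Tendsto.congr' hev tendsto_const_nhds
end

section
/- Let t : ℕ → ℝ with t_n ≥ 0 for all n, not identically zero, and n_0 the least index with t_{n_0} > 0. For n ≥ n_0 set ξ^{(n)}_j = t_j / (Σ_{i=0}^n t_i) ∈ stdSimplex ℝ (Fin (n+1)), let ξ^{(n)} be arbitrary in the simplex for n < n_0, define f_n(x)_j = x_j + x_{n+1}·ξ^{(n)}_j, and let Δ be the inverse limit. Let D = {y : ℕ → ℝ : y_j ≥ 0 for all j and Σ_{j=0}^N y_j ≤ 1 for all N} with the product topology, and define g : D → Π_n (Fin (n+1) → ℝ) by g(y)_n = (y_0, …, y_n) + (1 − Σ_{j=0}^n y_j)·ξ^{(n)} for n ≥ n_0 and g(y)_n = f_n(g(y)_{n+1})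 for n < n_0. Then g maps D into Δ, g is continuous and affine, g is surjective onto Δ, g(δ^{(j)}) = e_j for each j ∈ ℕ (where δ^{(j)} ∈ D is the indicator function of {j}), and g(0) = e_∞ (where e_∞ ∈ Δ is the unique element with n-th coordinate ξ^{(n)} for all n ≥ n_0). -/
/-!
The bonding maps `f_n` are linear and map simplices into simplices, and `g y` is a compatible
thread given from level `n₀` on by the explicit formula `levelMap`, which is continuous, affine
and simplex-valued on `D`; the formula is compatible with the bonding maps because the
`ξ^{(n)}`, `n ≥ n₀`, are themselves the levels of the thread `e_∞`. Every level below `n₀` is the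
image of the next one under a bonding map, so these properties propagate downwards. Two compatible threads that agree at some level
agree at all lower levels, which identifies `g δ^{(j)}` with `e_j` and `g 0` with `e_∞`.
For surjectivity onto `x ∈ Δ`, extend `x_m` by zeros to a point of `D`: its image under `g`
agrees with `x` up to level `m`. By compactness of `D` these points have a limit point, and by
continuity of `g` it is mapped to `x`.
-/

open Finset Filter Topology

theorem Nat.forall_of_forall_ge_of_succ {P : ℕ → Prop} (N : ℕ) (hge : ∀ n, N ≤ n → P n)
    (hsucc : ∀ n, P (n + 1) → P n) (n : ℕ) : P n :=
  Nat.decreasingInduction (motive := fun k _ => P k) (fun k _ h => hsucc k h)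
    (hge _ (le_max_right n N)) (le_max_left n N)

def bondingMap {n : ℕ} (w : Fin (n + 1) → ℝ) : (Fin (n + 2) → ℝ) →ₗ[ℝ] Fin (n + 1) → ℝ :=
  LinearMap.funLeft ℝ ℝ Fin.castSucc + (LinearMap.proj (Fin.last (n + 1))).smulRight w

@[simp]
theorem bondingMap_apply {n : ℕ} (w : Fin (n + 1) → ℝ) (v : Fin (n + 2) → ℝ) (j : Fin (n + 1)) :
    bondingMap w v j = v j.castSucc + v (Fin.last (n + 1)) * w j := by
  simp [bondingMap]

theorem bondingMap_mem_stdSimplex {n : ℕ} {w : Fin (n + 1) → ℝ} {v : Fin (n + 2) → ℝ}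
    (hw : w ∈ stdSimplex ℝ (Fin (n + 1))) (hv : v ∈ stdSimplex ℝ (Fin (n + 2))) :
    bondingMap w v ∈ stdSimplex ℝ (Fin (n + 1)) := by
  refine ⟨fun j => ?_, ?_⟩
  · rw [bondingMap_apply]
    exact add_nonneg (hv.1 _) (mul_nonneg (hv.1 _) (hw.1 j))
  · simp only [bondingMap_apply, sum_add_distrib, ← mul_sum, hw.2, mul_one]
    rw [← Fin.sum_univ_castSucc]
    exact hv.2

def IsCompatible (ξ x : ∀ n, Fin (n + 1) → ℝ) : Prop :=
  ∀ n, bondingMap (ξ n) (x (n + 1)) = x n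

theorem isCompatible_iff {ξ x : ∀ n, Fin (n + 1) → ℝ} :
    IsCompatible ξ x ↔ ∀ n (j : Fin (n + 1)),
      x (n + 1) j.castSucc + x (n + 1) (Fin.last (n + 1)) * ξ n j = x n j := by
  simp only [IsCompatible, funext_iff, bondingMap_apply]

def inverseLimit (ξ : ∀ n, Fin (n + 1) → ℝ) : Set (∀ n, Fin (n + 1) → ℝ) :=
  {x | (∀ n, x n ∈ stdSimplex ℝ (Fin (n + 1))) ∧ IsCompatible ξ x}

namespace IsCompatible

variable {ξ x x' : ∀ n, Fin (n + 1) → ℝ}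

theorem eq_of_le (hx : IsCompatible ξ x) (hx' : IsCompatible ξ x') {m n : ℕ} (hm : x m = x' m)
    (hnm : n ≤ m) : x n = x' n :=
  Nat.decreasingInduction (motive := fun k _ => x k = x' k)
    (fun k _ h => by rw [← hx k, ← hx' k, h]) hm hnm

theorem eq_of_forall_ge (hx : IsCompatible ξ x) (hx' : IsCompatible ξ x') (N : ℕ)
    (h : ∀ m, N ≤ m → x m = x' m) : x = x' :=
  funext fun n => hx.eq_of_le hx' (h _ (le_max_right n N)) (le_max_left n N)

end IsCompatible

def subProbSeqs : Set (ℕ → ℝ) :=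
  {y | (∀ j, 0 ≤ y j) ∧ ∀ N, ∑ j ∈ range (N + 1), y j ≤ 1}

theorem isCompact_subProbSeqs : IsCompact subProbSeqs := by
  have hclosed : IsClosed subProbSeqs := by
    simp only [subProbSeqs, Set.ofPred_and, Set.ofPred_forall]
    exact (isClosed_iInter fun j => isClosed_le continuous_const (continuous_apply j)).inter
      (isClosed_iInter fun N => isClosed_le (by fun_prop) continuous_const)
  refine (isCompact_univ_pi fun _ => isCompact_Icc (a := (0 : ℝ)) (b := 1)).of_isClosed_subset
    hclosed fun y hy j _ => ⟨hy.1 j, ?_⟩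
  exact (single_le_sum (fun i _ => hy.1 i) (self_mem_range_succ j)).trans (hy.2 j)

theorem extend_mem_subProbSeqs {m : ℕ} {v : Fin (m + 1) → ℝ}
    (hv : v ∈ stdSimplex ℝ (Fin (m + 1))) :
    Function.extend Fin.val v 0 ∈ subProbSeqs := by
  set y := Function.extend Fin.val v 0
  have hy : ∀ i, y i = if h : i < m + 1 then v ⟨i, h⟩ else 0 := fun i => by
    split_ifs with h
    · exact Fin.val_injective.extend_apply v 0 ⟨i, h⟩
    · exact Function.extend_apply' _ _ _ fun ⟨a, ha⟩ => h (ha ▸ a.isLt)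
  have hy0 : ∀ i, 0 ≤ y i := fun i => by
    rw [hy]
    split_ifs
    exacts [hv.1 _, le_rfl]
  refine ⟨hy0, fun N => ?_⟩
  calc ∑ i ∈ range (N + 1), y i ≤ ∑ i ∈ range (N + 1) ∪ range (m + 1), y i :=
        sum_le_sum_of_subset_of_nonneg subset_union_left fun i _ _ => hy0 i
    _ = ∑ i ∈ range (m + 1), y i :=
        (sum_subset subset_union_right fun i _ hi => by
          rw [hy, dif_neg (by simpa using hi)]).symm
    _ = 1 := by
        rw [← Fin.sum_univ_eq_sum_range]
        simpa [y, Fin.val_injective.extend_apply] using hv.2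

def levelMap (ξ : ∀ n, Fin (n + 1) → ℝ) (n : ℕ) (y : ℕ → ℝ) : Fin (n + 1) → ℝ :=
  fun j => y j + (1 - ∑ i ∈ range (n + 1), y i) * ξ n j

section levelMap

variable {ξ : ∀ n, Fin (n + 1) → ℝ} {n : ℕ}

theorem levelMap_mem_stdSimplex (hξ : ξ n ∈ stdSimplex ℝ (Fin (n + 1))) {y : ℕ → ℝ}
    (hy : y ∈ subProbSeqs) : levelMap ξ n y ∈ stdSimplex ℝ (Fin (n + 1)) := by
  refine ⟨fun j => add_nonneg (hy.1 j) (mul_nonneg (sub_nonneg.2 (hy.2 n)) (hξ.1 j)), ?_⟩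
  simp only [levelMap, sum_add_distrib, ← mul_sum, hξ.2, Fin.sum_univ_eq_sum_range (fun i => y i)]
  ring

theorem continuous_levelMap : Continuous (levelMap ξ n) :=
  continuous_pi fun j => by unfold levelMap; fun_prop

theorem levelMap_convexCombination {y z : ℕ → ℝ} {a b : ℝ} (hab : a + b = 1) :
    levelMap ξ n (fun i => a * y i + b * z i) = a • levelMap ξ n y + b • levelMap ξ n z := by
  ext j
  simp only [levelMap, sum_add_distrib, ← mul_sum, Pi.add_apply, Pi.smul_apply, smul_eq_mul]
  linear_combination (-ξ n j) * hab

theorem bondingMap_levelMap (hξ : bondingMap (ξ n) (ξ (n + 1)) = ξ n) (y : ℕ → ℝ) :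
    bondingMap (ξ n) (levelMap ξ (n + 1) y) = levelMap ξ n y := by
  ext j
  have hj := congrFun hξ j
  simp only [bondingMap_apply, levelMap, sum_range_succ _ (n + 1), Fin.val_castSucc,
    Fin.val_last] at hj ⊢
  linear_combination (1 - (∑ i ∈ range (n + 1), y i + y (n + 1))) * hj

theorem levelMap_indicator {j : ℕ} (hj : j ≤ n) :
    levelMap ξ n (fun m => if m = j then 1 else 0) =
      fun i : Fin (n + 1) => if (i : ℕ) = j then 1 else 0 := by
  ext i
  simp [levelMap, sum_ite_eq', Nat.lt_succ_iff.2 hj]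

theorem levelMap_zero : levelMap ξ n (fun _ => 0) = ξ n := by
  ext i
  simp [levelMap]

theorem levelMap_extend {v : Fin (n + 1) → ℝ} (hv : ∑ i, v i = 1) :
    levelMap ξ n (Function.extend Fin.val v 0) = v := by
  ext i
  rw [levelMap, ← Fin.sum_univ_eq_sum_range (Function.extend Fin.val v 0)]
  simp [Fin.val_injective.extend_apply, hv]

end levelMap

structure IsCompatibleLift (ξ : ∀ n, Fin (n + 1) → ℝ) (n₀ : ℕ)
    (g : (ℕ → ℝ) → ∀ n, Fin (n + 1) → ℝ) : Prop where
  isCompatible : ∀ y, IsCompatible ξ (g y)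
  eq_levelMap : ∀ y n, n₀ ≤ n → g y n = levelMap ξ n y

namespace IsCompatibleLift

variable {ξ : ∀ n, Fin (n + 1) → ℝ} {n₀ : ℕ} {g : (ℕ → ℝ) → ∀ n, Fin (n + 1) → ℝ}

theorem mapsTo (hg : IsCompatibleLift ξ n₀ g) (hξ : ∀ n, ξ n ∈ stdSimplex ℝ (Fin (n + 1))) :
    Set.MapsTo g subProbSeqs (inverseLimit ξ) := fun y hy =>
  ⟨Nat.forall_of_forall_ge_of_succ n₀
    (fun n hn => hg.eq_levelMap y n hn ▸ levelMap_mem_stdSimplex (hξ n) hy)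
    (fun n h => hg.isCompatible y n ▸ bondingMap_mem_stdSimplex (hξ n) h),
    hg.isCompatible y⟩

theorem continuous (hg : IsCompatibleLift ξ n₀ g) : Continuous g :=
  continuous_pi <| Nat.forall_of_forall_ge_of_succ n₀
    (fun n hn => by simpa only [hg.eq_levelMap _ n hn] using continuous_levelMap)
    (fun n h => by
      rw [show (fun y => g y n) = bondingMap (ξ n) ∘ fun y => g y (n + 1) from
        funext fun y => (hg.isCompatible y n).symm]
      exact (bondingMap (ξ n)).continuous_of_finiteDimensional.comp h)

theorem map_convexCombination (hg : IsCompatibleLift ξ n₀ g) (y z : ℕ → ℝ) {a b : ℝ}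
    (hab : a + b = 1) : g (fun i => a * y i + b * z i) = a • g y + b • g z :=
  funext <| Nat.forall_of_forall_ge_of_succ n₀
    (fun n hn => by simp only [Pi.add_apply, Pi.smul_apply, hg.eq_levelMap _ n hn,
      levelMap_convexCombination hab])
    (fun n h => by
      simp only [Pi.add_apply, Pi.smul_apply] at h ⊢
      rw [← hg.isCompatible _ n, ← hg.isCompatible y n, ← hg.isCompatible z n, h, map_add,
        map_smul, map_smul])

theorem surjOn (hg : IsCompatibleLift ξ n₀ g) : Set.SurjOn g subProbSeqs (inverseLimit ξ) := by
  rintro x ⟨hxs, hxc⟩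
  set ys : ℕ → ℕ → ℝ := fun m => Function.extend Fin.val (x m) 0
  have hgys : Tendsto (g ∘ ys) atTop (𝓝 x) := by
    refine tendsto_pi_nhds.2 fun n => tendsto_nhds_of_eventually_eq ?_
    filter_upwards [eventually_ge_atTop (max n n₀)] with m hm
    refine (hg.isCompatible _).eq_of_le hxc ?_ (le_of_max_le_left hm)
    rw [hg.eq_levelMap _ _ (le_of_max_le_right hm), levelMap_extend (hxs m).2]
  obtain ⟨y, hy, φ, hφ, hlim⟩ :=
    isCompact_subProbSeqs.tendsto_subseq fun m => extend_mem_subProbSeqs (hxs m)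
  exact ⟨y, hy, tendsto_nhds_unique ((hg.continuous.tendsto y).comp hlim)
    (hgys.comp hφ.tendsto_atTop)⟩

end IsCompatibleLift

theorem stmt_15_general (n₀ : ℕ)
    (ξ : ∀ n : ℕ, Fin (n + 1) → ℝ)
    (hξsimplex : ∀ n, ξ n ∈ stdSimplex ℝ (Fin (n + 1)))
    (Δ : Set (∀ n, Fin (n + 1) → ℝ))
    (hΔ : Δ = {x | (∀ n, x n ∈ stdSimplex ℝ (Fin (n + 1))) ∧
      ∀ n, ∀ j : Fin (n + 1),
        x (n + 1) j.castSucc + x (n + 1) (Fin.last (n + 1)) * ξ n j = x n j})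
    (e : ℕ → ∀ m : ℕ, Fin (m + 1) → ℝ)
    (heΔ : ∀ n, e n ∈ Δ)
    (he : ∀ n, ∀ m, n ≤ m → ∀ j : Fin (m + 1), e n m j = if (j : ℕ) = n then 1 else 0)
    (eInf : ∀ m : ℕ, Fin (m + 1) → ℝ)
    (heInfΔ : eInf ∈ Δ)
    (heInf : ∀ n, n₀ ≤ n → eInf n = ξ n)
    (D : Set (ℕ → ℝ))
    (hD : D = {y | (∀ j, 0 ≤ y j) ∧ ∀ N, ∑ j ∈ Finset.range (N + 1), y j ≤ 1})
    (g : (ℕ → ℝ) → ∀ n, Fin (n + 1) → ℝ)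
    (hg₁ : ∀ y n, n₀ ≤ n → ∀ j : Fin (n + 1),
      g y n j = y (j : ℕ) + (1 - ∑ i ∈ Finset.range (n + 1), y i) * ξ n j)
    (hg₂ : ∀ y n, n < n₀ → ∀ j : Fin (n + 1),
      g y n j = g y (n + 1) j.castSucc + g y (n + 1) (Fin.last (n + 1)) * ξ n j) :
    Set.MapsTo g D Δ ∧
    ContinuousOn g D ∧
    (∀ y ∈ D, ∀ z ∈ D, ∀ a b : ℝ, 0 ≤ a → 0 ≤ b → a + b = 1 →
      ∀ (n : ℕ) (j : Fin (n + 1)),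
        g (fun i => a * y i + b * z i) n j = a * g y n j + b * g z n j) ∧
    Set.SurjOn g D Δ ∧
    (∀ j : ℕ, g (fun m => if m = j then 1 else 0) = e j) ∧
    g (fun _ => 0) = eInf := by
  obtain rfl : Δ = inverseLimit ξ := by
    simp only [hΔ, inverseLimit, isCompatible_iff]
  obtain rfl : D = subProbSeqs := hD
  have hξ : ∀ n, n₀ ≤ n → bondingMap (ξ n) (ξ (n + 1)) = ξ n := fun n hn => by
    simpa only [heInf n hn, heInf (n + 1) (by omega)] using heInfΔ.2 n
  have hgn : ∀ y n, n₀ ≤ n → g y n = levelMap ξ n y := fun y n hn => funext (hg₁ y n hn)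
  have hg : IsCompatibleLift ξ n₀ g := by
    refine ⟨fun y n => ?_, hgn⟩
    rcases lt_or_ge n n₀ with h | h
    · exact funext fun j => (hg₂ y n h j).symm
    · rw [hgn y n h, hgn y (n + 1) (by omega), bondingMap_levelMap (hξ n h)]
  refine ⟨hg.mapsTo hξsimplex, hg.continuous.continuousOn,
    fun y _ z _ a b _ _ hab n j => congrFun (congrFun (hg.map_convexCombination y z hab) n) j,
    hg.surjOn, fun j => ?_, ?_⟩
  · refine (hg.isCompatible _).eq_of_forall_ge (heΔ j).2 (max n₀ j) fun m hm => ?_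
    rw [hgn _ _ (le_of_max_le_left hm), levelMap_indicator (le_of_max_le_right hm)]
    exact funext fun i => (he j m (le_of_max_le_right hm) i).symm
  · refine (hg.isCompatible _).eq_of_forall_ge heInfΔ.2 n₀ fun m hm => ?_
    rw [hgn _ _ hm, levelMap_zero, heInf m hm]

/-- Stationary case: the map `g` from the Bauer-simplex model `D` into the inverse limit `Δ`
is well defined, continuous, affine and surjective onto `Δ`; it sends the indicator `δ^{(j)}`
to `e_j` and the zero sequence to `e_∞`. -/
theorem stmt_15 (t : ℕ → ℝ) (ht : ∀ n, 0 ≤ t n) (n₀ : ℕ)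
    (hn₀ : 0 < t n₀) (hn₀min : ∀ i, i < n₀ → t i = 0)
    (ξ : ∀ n : ℕ, Fin (n + 1) → ℝ)
    (hξsimplex : ∀ n, ξ n ∈ stdSimplex ℝ (Fin (n + 1)))
    (hξ : ∀ n, n₀ ≤ n → ∀ j : Fin (n + 1),
      ξ n j = t (j : ℕ) / ∑ i ∈ Finset.range (n + 1), t i)
    (Δ : Set (∀ n, Fin (n + 1) → ℝ))
    (hΔ : Δ = {x | (∀ n, x n ∈ stdSimplex ℝ (Fin (n + 1))) ∧
      ∀ n, ∀ j : Fin (n + 1),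
        x (n + 1) j.castSucc + x (n + 1) (Fin.last (n + 1)) * ξ n j = x n j})
    (e : ℕ → ∀ m : ℕ, Fin (m + 1) → ℝ)
    (heΔ : ∀ n, e n ∈ Δ)
    (he : ∀ n, ∀ m, n ≤ m → ∀ j : Fin (m + 1), e n m j = if (j : ℕ) = n then 1 else 0)
    (eInf : ∀ m : ℕ, Fin (m + 1) → ℝ)
    (heInfΔ : eInf ∈ Δ)
    (heInf : ∀ n, n₀ ≤ n → eInf n = ξ n)
    (D : Set (ℕ → ℝ))
    (hD : D = {y | (∀ j, 0 ≤ y j) ∧ ∀ N, ∑ j ∈ Finset.range (N + 1), y j ≤ 1})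
    (g : (ℕ → ℝ) → ∀ n, Fin (n + 1) → ℝ)
    (hg₁ : ∀ y n, n₀ ≤ n → ∀ j : Fin (n + 1),
      g y n j = y (j : ℕ) + (1 - ∑ i ∈ Finset.range (n + 1), y i) * ξ n j)
    (hg₂ : ∀ y n, n < n₀ → ∀ j : Fin (n + 1),
      g y n j = g y (n + 1) j.castSucc + g y (n + 1) (Fin.last (n + 1)) * ξ n j) :
    Set.MapsTo g D Δ ∧
    ContinuousOn g D ∧
    (∀ y ∈ D, ∀ z ∈ D, ∀ a b : ℝ, 0 ≤ a → 0 ≤ b → a + b = 1 →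
      ∀ (n : ℕ) (j : Fin (n + 1)),
        g (fun i => a * y i + b * z i) n j = a * g y n j + b * g z n j) ∧
    Set.SurjOn g D Δ ∧
    (∀ j : ℕ, g (fun m => if m = j then 1 else 0) = e j) ∧
    g (fun _ => 0) = eInf :=
  stmt_15_general n₀ ξ hξsimplex Δ hΔ e heΔ he eInf heInfΔ heInf D hD g hg₁ hg₂
end

section
/- Let A be a C*-algebra whose underlying topological space is separable, let ι be a nonempty index type, k : ι → ℕ, and for each α ∈ ι let ν_α : A → Matrix (Fin (k α)) ℂ be a star-algebra homomorphism. Assume the family is norming: ‖a‖ = ⨆_{α ∈ ι} ‖ν_α(a)‖ for every a ∈ A (where the matrix algebras carry their C*-operator norms). Then there exists a sequence s : ℕ → ι such that the countable subfamily (ν_{s(j)})_{j ∈ ℕ} is separating: for every a ∈ A with a ≠ 0 there exists j ∈ ℕ with ν_{s(j)}(a) ≠ 0. -/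
open scoped Matrix.Norms.L2Operator

/-!
Star homomorphisms of C*-algebras are contractive, so the functions `a ↦ ‖ν α a‖` are all
1-Lipschitz, as is the norm they approximate from below. Choosing, for each point of a dense
sequence and each precision `1/(m+1)`, one index that approximates the norm there to that precision
gives countably many indices, and these approximate the norm to any precision at every point; in
particular they detect every nonzero element.
-/

open TopologicalSpace

theorem exists_seq_forall_exists_sub_lt_of_lipschitzWith {X ι : Type*} [PseudoMetricSpace X]
    [SeparableSpace X] [Nonempty X] {g : X → ℝ} {φ : ι → X → ℝ} (hg : LipschitzWith 1 g)
    (hφ : ∀ i, LipschitzWith 1 (φ i)) (happrox : ∀ x, ∀ ε > 0, ∃ i, g x - ε < φ i x) :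
    ∃ s : ℕ → ι, ∀ x, ∀ ε > 0, ∃ j, g x - ε < φ (s j) x := by
  obtain ⟨u, hu⟩ := exists_dense_seq X
  choose t ht using fun n m : ℕ => happrox (u n) (1 / (m + 1)) Nat.one_div_pos_of_nat
  refine ⟨fun j => t j.unpair.1 j.unpair.2, fun x ε hε => ?_⟩
  obtain ⟨m, hm⟩ := exists_nat_one_div_lt (div_pos hε three_pos)
  obtain ⟨n, hn⟩ := hu.exists_dist_lt x (div_pos hε three_pos)
  refine ⟨Nat.pair n m, ?_⟩
  simp only [Nat.unpair_pair]
  have hg_near : g x - g (u n) ≤ dist x (u n) := by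
    simpa using (hg.dist_le_mul x (u n)).trans' (le_abs_self _)
  have hφ_near : φ (t n m) (u n) - φ (t n m) x ≤ dist x (u n) := by
    simpa [dist_comm] using (hφ (t n m) |>.dist_le_mul (u n) x).trans' (le_abs_self _)
  linarith [ht n m]

theorem NonUnitalStarAlgHom.lipschitzWith_one {F A B : Type*} [NonUnitalCStarAlgebra A]
    [NonUnitalCStarAlgebra B] [FunLike F A B] [NonUnitalAlgHomClass F ℂ A B] [StarHomClass F A B]
    (φ : F) : LipschitzWith 1 φ :=
  AddMonoidHomClass.lipschitz_of_bound_nnnorm φ 1 <| by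
    simpa using NonUnitalStarAlgHom.nnnorm_apply_le φ

/-- A separable C*-algebra with a norming family of finite dimensional representations admits
a countable separating subfamily. -/
theorem stmt_16 (A : Type*) [CStarAlgebra A] [TopologicalSpace.SeparableSpace A]
    (ι : Type*) [Nonempty ι] (k : ι → ℕ)
    (ν : ∀ α : ι, A →⋆ₐ[ℂ] Matrix (Fin (k α)) (Fin (k α)) ℂ)
    (hnorming : ∀ a : A, ‖a‖ = ⨆ α : ι, ‖ν α a‖) :
    ∃ s : ℕ → ι, ∀ a : A, a ≠ 0 → ∃ j : ℕ, ν (s j) a ≠ 0 := by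
  have hν : ∀ α, LipschitzWith 1 fun a => ‖ν α a‖ := fun α => by
    simpa [Function.comp_def] using
      lipschitzWith_one_norm.comp (NonUnitalStarAlgHom.lipschitzWith_one (ν α))
  obtain ⟨s, hs⟩ := exists_seq_forall_exists_sub_lt_of_lipschitzWith lipschitzWith_one_norm hν
    fun a ε hε => exists_lt_of_lt_ciSup <| (hnorming a).symm ▸ sub_lt_self _ hε
  refine ⟨s, fun a ha => ?_⟩
  obtain ⟨j, hj⟩ := hs a ‖a‖ (norm_pos_iff.mpr ha)
  exact ⟨j, norm_pos_iff.mp (by simpa using hj)⟩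
end

section
/- Let m, r : ℕ → ℕ satisfy 1 ≤ r(n) ≤ m(n) for all n ≥ 1 and r(n) < r(n+1) for all n ≥ 1. For each n ≥ 1 let A_n(ℓ,k) ∈ ℕ be given for 1 ≤ ℓ ≤ m(n+1) and 1 ≤ k ≤ m(n), and assume the (RFD-JI) form: A_n(ℓ,k) = 1 if ℓ = k ≤ r(n), A_n(ℓ,k) = 0 if ℓ ≤ r(n) and ℓ ≠ k, and A_n(ℓ,k) ≥ 1 whenever ℓ > r(n). Let T_n ⊆ {1, …, m(n)} (n ≥ 1) be sets satisfying the two ideal-closure conditions: (1) if k ∈ T_n and A_n(ℓ,k) ≠ 0 then ℓ ∈ T_{n+1}; (2) if ℓ ∈ T_{n+1} for every ℓ with A_n(ℓ,k) ≠ 0, then k ∈ T_n. Suppose j_0 ≥ 1 is such that T_{j_0} is nonempty, and set F = {1, …, r(j_0)} \ T_{j_0}. Then T_j = {1, …, m(j)} \ F for every j > j_0. -/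
/-- The combinatorial core of just-infiniteness for (RFD-JI) Bratteli diagrams: for any
ideal-closed system of subsets `T_n` of the summand indices, if `T_{j₀}` is nonempty and
`F = {1,…,r(j₀)} \ T_{j₀}`, then `T_j = {1,…,m(j)} \ F` for every `j > j₀`. -/
theorem stmt_17 (m r : ℕ → ℕ)
    (hr1 : ∀ n, 1 ≤ n → 1 ≤ r n) (hrm : ∀ n, 1 ≤ n → r n ≤ m n)
    (hrmono : ∀ n, 1 ≤ n → r n < r (n + 1))
    (A : ℕ → ℕ → ℕ → ℕ)
    -- the (RFD-JI) form of the multiplicity matrices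
    (hA1 : ∀ n, 1 ≤ n → ∀ ℓ k, 1 ≤ ℓ → ℓ ≤ r n → 1 ≤ k → k ≤ m n →
      A n ℓ k = if ℓ = k then 1 else 0)
    (hA2 : ∀ n, 1 ≤ n → ∀ ℓ k, r n < ℓ → ℓ ≤ m (n + 1) → 1 ≤ k → k ≤ m n →
      1 ≤ A n ℓ k)
    (T : ℕ → Set ℕ)
    (hTsub : ∀ n, 1 ≤ n → T n ⊆ Set.Icc 1 (m n))
    -- ideal-closure conditions
    (hT1 : ∀ n, 1 ≤ n → ∀ k ∈ T n, ∀ ℓ, 1 ≤ ℓ → ℓ ≤ m (n + 1) →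
      A n ℓ k ≠ 0 → ℓ ∈ T (n + 1))
    (hT2 : ∀ n, 1 ≤ n → ∀ k, 1 ≤ k → k ≤ m n →
      (∀ ℓ, 1 ≤ ℓ → ℓ ≤ m (n + 1) → A n ℓ k ≠ 0 → ℓ ∈ T (n + 1)) → k ∈ T n)
    (j₀ : ℕ) (hj₀ : 1 ≤ j₀) (hT : (T j₀).Nonempty) :
    ∀ j, j₀ < j → T j = Set.Icc 1 (m j) \ (Set.Icc 1 (r j₀) \ T j₀) := by

  have key : ∀ n, 1 ≤ n → (T n).Nonempty →
      T (n + 1) = Set.Icc 1 (m (n + 1)) \ (Set.Icc 1 (r n) \ T n) := by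
    intro n hn hne
    obtain ⟨k₀, hk₀⟩ := hne
    obtain ⟨hk₀1, hk₀2⟩ := hTsub n hn hk₀
    have hrn := hr1 n hn
    have ha : ∀ ℓ, r n < ℓ → ℓ ≤ m (n + 1) → ℓ ∈ T (n + 1) := fun ℓ h1 h2 =>
      hT1 n hn k₀ hk₀ ℓ (by omega) h2
        (by have := hA2 n hn ℓ k₀ h1 h2 hk₀1 hk₀2; omega)
    ext ℓ
    constructor
    · intro hℓ
      refine ⟨hTsub (n + 1) (by omega) hℓ, ?_⟩
      rintro ⟨⟨h1, h2⟩, h3⟩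
      apply h3
      apply hT2 n hn ℓ h1 (le_trans h2 (hrm n hn))
      intro ℓ' h1' h2' hA
      by_cases hc : ℓ' ≤ r n
      · have hid := hA1 n hn ℓ' ℓ h1' hc h1 (le_trans h2 (hrm n hn))
        have heq : ℓ' = ℓ := by by_contra hneq; rw [if_neg hneq] at hid; omega
        rwa [heq]
      · exact ha ℓ' (by omega) h2'
    · rintro ⟨⟨h1, h2⟩, h3⟩
      by_cases hc : ℓ ≤ r n
      · have hℓT : ℓ ∈ T n := by
          by_contra h; exact h3 ⟨⟨h1, hc⟩, h⟩
        have hAval := hA1 n hn ℓ ℓ h1 hc h1 (le_trans hc (hrm n hn))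
        rw [if_pos rfl] at hAval
        exact hT1 n hn ℓ hℓT ℓ h1 h2 (by omega)
      · exact ha ℓ (by omega) h2
  have hmono : ∀ b, j₀ < b → r j₀ < r b := by
    intro b hb
    induction b, hb using Nat.le_induction with
    | base => exact hrmono j₀ hj₀
    | succ b hb ih => exact ih.trans (hrmono b (by omega))
  intro j hj
  induction j, hj using Nat.le_induction with
  | base => exact key j₀ hj₀ hT
  | succ j hj ih =>
    have hj1 : 1 ≤ j := by omega
    have hrj : r j₀ < r j := hmono j hj
    have hne : (T j).Nonempty := by
      refine ⟨r j, ?_⟩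
      rw [ih]
      exact ⟨⟨hr1 j hj1, hrm j hj1⟩, fun hmem => by
        rcases hmem with ⟨⟨_, h2⟩, _⟩; omega⟩
    rw [key j hj1 hne, ih]
    congr 1
    ext x
    constructor
    · rintro ⟨⟨h1, h2⟩, h3⟩
      by_contra hF
      exact h3 ⟨⟨h1, le_trans h2 (hrm j hj1)⟩, hF⟩
    · rintro ⟨⟨h1, h2⟩, h3⟩
      exact ⟨⟨h1, by omega⟩, fun hmem => hmem.2 ⟨⟨h1, h2⟩, h3⟩⟩
end

section
/- Let A be a unital C*-algebra over ℂ. For a surjective unital star-algebra homomorphism π : A → Matrix (Fin k) ℂ with k ≥ 1, define τ_π : A → ℂ by τ_π(a) = trace(π(a))/k; then τ_π is a tracial state on A, i.e. τ_π(1) = 1, τ_π(a* a) is real and ≥ 0 for all a, and τ_π(ab) = τ_π(ba) for all a, b. Moreover, if π : A → Matrix (Fin k) ℂ and π' : A → Matrix (Fin k') ℂ are two surjective unital star-algebra homomorphisms with ker π ≠ ker π', then τ_π ≠ τ_{π'}. Consequently, if A admits an infinite family of surjective unital star-algebra homomorphisms onto full matrix algebras with pairwise distinct kernels, then A has infinitely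 many pairwise distinct tracial states. -/
/-!
Composing with `π`, the normalized trace inherits unitality and traciality from the matrix
trace, and positivity from `π (a⋆ a) = (π a)ᴴ (π a)` together with `tr (Mᴴ M) = ∑ |M i j|² ≥ 0`.
The same identity shows that `tr (Mᴴ M) = 0` only for `M = 0`, so `π a = 0 ↔ τ_π (a⋆ a) = 0`:
the kernel of `π` can be read off `τ_π`, and distinct kernels force distinct traces.
-/

open Matrix
open scoped ComplexOrder

section TraceOfRepresentation

variable {A R n F : Type*} [Fintype n] [Mul A]

theorem trace_map_mul_comm [AddCommMonoid R] [CommMagma R] [FunLike F A (Matrix n n R)]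
    [MulHomClass F A (Matrix n n R)] (π : F) (a b : A) :
    trace (π (a * b)) = trace (π (b * a)) := by
  rw [map_mul, map_mul, trace_mul_comm]

variable [Star A] [CommRing R] [StarRing R] [FunLike F A (Matrix n n R)]
  [MulHomClass F A (Matrix n n R)] [StarHomClass F A (Matrix n n R)]

theorem map_star_mul_self (π : F) (a : A) : π (star a * a) = (π a)ᴴ * π a := by
  rw [map_mul, map_star, star_eq_conjTranspose]

variable [PartialOrder R] [StarOrderedRing R]

theorem trace_map_star_mul_self_nonneg (π : F) (a : A) : 0 ≤ trace (π (star a * a)) := by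
  rw [map_star_mul_self]
  exact (posSemidef_conjTranspose_mul_self _).trace_nonneg

theorem trace_map_star_mul_self_eq_zero_iff [NoZeroDivisors R] (π : F) (a : A) :
    trace (π (star a * a)) = 0 ↔ π a = 0 := by
  rw [map_star_mul_self, trace_conjTranspose_mul_self_eq_zero_iff]

end TraceOfRepresentation

section KernelFromTrace

variable {A K n n' F F' : Type*} [Fintype n] [Fintype n'] [Mul A] [Star A]
  [Field K] [PartialOrder K] [StarRing K] [StarOrderedRing K]
  [FunLike F A (Matrix n n K)] [MulHomClass F A (Matrix n n K)] [StarHomClass F A (Matrix n n K)]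
  [FunLike F' A (Matrix n' n' K)] [MulHomClass F' A (Matrix n' n' K)]
  [StarHomClass F' A (Matrix n' n' K)]

theorem map_eq_zero_iff_trace_div_star_mul_self_eq_zero (π : F) {c : K} (hc : c ≠ 0) (a : A) :
    π a = 0 ↔ trace (π (star a * a)) / c = 0 := by
  rw [div_eq_zero_iff, or_iff_left hc, trace_map_star_mul_self_eq_zero_iff]

theorem trace_div_ne_of_ker_ne (π : F) (π' : F') {c c' : K} (hc : c ≠ 0) (hc' : c' ≠ 0)
    (hker : {a : A | π a = 0} ≠ {a : A | π' a = 0}) :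
    (fun a : A => trace (π a) / c) ≠ (fun a : A => trace (π' a) / c') := by
  intro h
  refine hker (Set.ext fun a => ?_)
  simp only [Set.mem_ofPred_eq, map_eq_zero_iff_trace_div_star_mul_self_eq_zero π hc,
    map_eq_zero_iff_trace_div_star_mul_self_eq_zero π' hc', congrFun h]

end KernelFromTrace

/-- Composing a surjective unital star-homomorphism `π : A → M_k(ℂ)` with the normalized
trace gives a tracial state `τ_π`; homomorphisms with distinct kernels give distinct tracial
states; hence infinitely many surjections onto matrix algebras with pairwise distinct kernels
yield infinitely many tracial states. -/
theorem stmt_18 (A : Type*) [CStarAlgebra A] :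
    -- (i) τ_π is a tracial state
    (∀ (k : ℕ), 1 ≤ k → ∀ π : A →⋆ₐ[ℂ] Matrix (Fin k) (Fin k) ℂ, Function.Surjective π →
      (Matrix.trace (π 1) / (k : ℂ) = 1) ∧
      (∀ a : A, 0 ≤ (Matrix.trace (π (star a * a)) / (k : ℂ)).re ∧
        (Matrix.trace (π (star a * a)) / (k : ℂ)).im = 0) ∧
      (∀ a b : A, Matrix.trace (π (a * b)) / (k : ℂ) = Matrix.trace (π (b * a)) / (k : ℂ))) ∧
    -- (ii) distinct kernels give distinct tracial states
    (∀ (k k' : ℕ), 1 ≤ k → 1 ≤ k' →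
      ∀ (π : A →⋆ₐ[ℂ] Matrix (Fin k) (Fin k) ℂ)
        (π' : A →⋆ₐ[ℂ] Matrix (Fin k') (Fin k') ℂ),
      Function.Surjective π → Function.Surjective π' →
      {a : A | π a = 0} ≠ {a : A | π' a = 0} →
      (fun a : A => Matrix.trace (π a) / (k : ℂ)) ≠
        (fun a : A => Matrix.trace (π' a) / (k' : ℂ))) ∧
    -- (iii) infinitely many pairwise distinct kernels give infinitely many tracial states
    (∀ (ι : Type) (_ : Infinite ι) (ks : ι → ℕ)
      (πs : ∀ i : ι, A →⋆ₐ[ℂ] Matrix (Fin (ks i)) (Fin (ks i)) ℂ),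
      (∀ i, 1 ≤ ks i) → (∀ i, Function.Surjective (πs i)) →
      (∀ i j : ι, i ≠ j → {a : A | πs i a = 0} ≠ {a : A | πs j a = 0}) →
      (Set.range (fun i : ι => (fun a : A => Matrix.trace (πs i a) / (ks i : ℂ)))).Infinite) := by
  have hk : ∀ k : ℕ, 1 ≤ k → (k : ℂ) ≠ 0 := fun k hk => Nat.cast_ne_zero.mpr (by omega)
  refine ⟨fun k hk1 π _ => ⟨?_, fun a => ?_, fun a b => ?_⟩,
    fun k k' hk1 hk1' π π' _ _ => trace_div_ne_of_ker_ne π π' (hk k hk1) (hk k' hk1'),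
    fun ι _ ks πs hks _ hkers => Set.infinite_range_of_injective fun i j hij => ?_⟩
  · simp [hk k hk1]
  · obtain ⟨hre, him⟩ := Complex.nonneg_iff.mp <|
      div_nonneg (trace_map_star_mul_self_nonneg π a) (Nat.cast_nonneg (α := ℂ) k)
    exact ⟨hre, him.symm⟩
  · rw [trace_map_mul_comm]
  · by_contra hne
    exact trace_div_ne_of_ker_ne (πs i) (πs j) (hk _ (hks i)) (hk _ (hks j)) (hkers i j hne) hij
end
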